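/- arXiv:1906.09801 — 8 statements merged into one kernel-verified Lean document; each statement's English description precedes it below -/
import Mathlib

section
/- The function Ψ_f is a well-defined vector-valued holomorphic function on ℂ^k (independent of the choice of admissible radius R), and if P_s has k pairwise distinct roots z_1,…,z_k, then its h-th component satisfies ψ_h(s) = Σ_{j=1}^{k} z_j^h f(z_j) for every h ∈ {0,…,k−1}. -/
/-!
Put `Ψ_h(s) := Σ_a a^h f(a)`, the sum over the roots `a` of `P_s` counted with multiplicity.
Since `P'_s/P_s = Σ_a (ζ - a)⁻¹` away from the roots, Cauchy's integral formula turns the contour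
integral over any circle enclosing the roots into this sum, which proves independence of `R`;
when the roots are distinct they are exactly the `z_j`. For holomorphy, the roots of `P_s` lie in
the disc of radius `max 1 (Σ |s_i|)`, so near a given `s₀` one fixed circle encloses all of them,
and the integrand is `C¹` in `(s, ζ)` off the zero set of `P_s(ζ)`: differentiate under the
integral sign.
-/

open Matrix Complex

noncomputable section

/-- The universal monic polynomial `P_s(z) = Σ_{h=0}^{k} (−1)^h s_h z^{k−h}` (with `s_0 = 1`),
where `s i` represents the `(i+1)`-st coefficient `s_{i+1}`. -/
def LP (k : ℕ) (s : Fin k → ℂ) (z : ℂ) : ℂ :=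
  z ^ k + ∑ i : Fin k, (-1 : ℂ) ^ ((i : ℕ) + 1) * s i * z ^ (k - 1 - (i : ℕ))

/-- The derivative `P'_s(z) = Σ_{h=0}^{k−1} (−1)^h (k−h) s_h z^{k−h−1}` (with `s_0 = 1`). -/
def LP' (k : ℕ) (s : Fin k → ℂ) (z : ℂ) : ℂ :=
  (k : ℂ) * z ^ (k - 1) +
    ∑ i : Fin k, (-1 : ℂ) ^ ((i : ℕ) + 1) * ((k - 1 - (i : ℕ) : ℕ) : ℂ) * s i *
      z ^ (k - 2 - (i : ℕ))

open Polynomial Metric Filter Topology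

theorem eval_derivative_prod_X_sub_C {K : Type*} [Field K] (M : Multiset K) {z : K}
    (hz : ((M.map fun a => X - C a).prod).eval z ≠ 0) :
    (derivative (M.map fun a => X - C a).prod).eval z =
      ((M.map fun a => X - C a).prod).eval z * (M.map fun a => (z - a)⁻¹).sum := by
  induction M using Multiset.induction with
  | empty => simp
  | cons a M ih =>
    simp only [Multiset.map_cons, Multiset.prod_cons, eval_mul, eval_sub, eval_X, eval_C,
      mul_ne_zero_iff, sub_ne_zero] at hz ⊢
    simp only [derivative_mul, derivative_sub, derivative_X, derivative_C, sub_zero, one_mul,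
      eval_add, eval_mul, eval_sub, eval_X, eval_C, Multiset.sum_cons, ih hz.2]
    field_simp [sub_ne_zero.2 hz.1]

theorem eval_derivative_eq_mul_sum_inv_sub_roots {K : Type*} [Field K] {p : K[X]}
    (hsplit : p.roots.card = p.natDegree) {z : K} (hz : p.eval z ≠ 0) :
    (derivative p).eval z = p.eval z * (p.roots.map fun a => (z - a)⁻¹).sum := by
  have hp : p ≠ 0 := by rintro rfl; exact hz eval_zero
  rw [← C_leadingCoeff_mul_prod_multiset_X_sub_C hsplit, eval_mul] at hz ⊢
  rw [derivative_C_mul, eval_mul, eval_derivative_prod_X_sub_C _ (right_ne_zero_of_mul hz),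
    mul_assoc, roots_C_mul _ (leadingCoeff_ne_zero.2 hp), roots_multiset_prod_X_sub_C]

theorem roots_eq_map_of_injective {R : Type*} [CommRing R] [IsDomain R] {ι : Type*} [Fintype ι]
    {p : R[X]} (hp : p ≠ 0) (hdeg : p.natDegree ≤ Fintype.card ι) {z : ι → R}
    (hz : Function.Injective z) (hroot : ∀ j, p.IsRoot (z j)) :
    p.roots = Finset.univ.val.map z := by
  refine (Multiset.eq_of_le_of_card_le ?_ ?_).symm
  · refine (Multiset.le_iff_subset (Finset.univ.nodup.map hz)).2 fun a ha => ?_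
    obtain ⟨j, -, rfl⟩ := Multiset.mem_map.1 ha
    exact (mem_roots hp).2 (hroot j)
  · simpa using (card_roots' p).trans hdeg

theorem circleIntegral_mul_sum_inv_sub {g : ℂ → ℂ} {c : ℂ} {R : ℝ}
    (hg : DifferentiableOn ℂ g (closedBall c R)) {M : Multiset ℂ} (hM : ∀ a ∈ M, a ∈ ball c R) :
    ∮ ζ in C(c, R), g ζ * (M.map fun a => (ζ - a)⁻¹).sum = 2 * Real.pi * I * (M.map g).sum := by
  induction M using Multiset.induction with
  | empty => simp [circleIntegral]
  | cons a M ih =>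
    have hM' : ∀ b ∈ M, b ∈ ball c R := fun b hb => hM b (Multiset.mem_cons_of_mem hb)
    have ha : a ∈ ball c R := hM a (Multiset.mem_cons_self a M)
    have hR : 0 ≤ R := (pos_of_mem_ball ha).le
    have hinv : ∀ b ∈ ball c R, ContinuousOn (fun ζ => (ζ - b)⁻¹) (sphere c R) := fun b hb =>
      (continuousOn_id.sub continuousOn_const).inv₀ fun ζ hζ => sub_ne_zero.2 <|
        ne_of_mem_of_not_mem hζ fun hb' => (mem_ball.1 hb).ne (mem_sphere.1 hb')
    have hgc : ContinuousOn g (sphere c R) := hg.continuousOn.mono sphere_subset_closedBall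
    have hint_a : CircleIntegrable (fun ζ => g ζ * (ζ - a)⁻¹) c R :=
      (hgc.mul (hinv a ha)).circleIntegrable hR
    have hint_M : CircleIntegrable (fun ζ => g ζ * (M.map fun b => (ζ - b)⁻¹).sum) c R :=
      (hgc.mul (continuousOn_multiset_sum M fun b hb => hinv b (hM' b hb))).circleIntegrable hR
    have hcauchy : ∮ ζ in C(c, R), g ζ * (ζ - a)⁻¹ = 2 * Real.pi * I * g a := by
      simpa only [smul_eq_mul, mul_comm] using hg.circleIntegral_sub_inv_smul ha
    simp only [Multiset.map_cons, Multiset.sum_cons, mul_add]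
    rw [circleIntegral.integral_add hint_a hint_M, ih hM', hcauchy]

theorem circleIntegral_mul_derivative_div_eq_sum_roots {p : ℂ[X]} (hp : p ≠ 0) {g : ℂ → ℂ}
    {c : ℂ} {R : ℝ} (hR : 0 ≤ R) (hg : DifferentiableOn ℂ g (closedBall c R))
    (hroots : ∀ a ∈ p.roots, a ∈ ball c R) :
    (2 * Real.pi * I)⁻¹ * ∮ ζ in C(c, R), g ζ * (derivative p).eval ζ / p.eval ζ =
      (p.roots.map g).sum := by
  have hlogDeriv : Set.EqOn (fun ζ => g ζ * (derivative p).eval ζ / p.eval ζ)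
      (fun ζ => g ζ * (p.roots.map fun a => (ζ - a)⁻¹).sum) (sphere c R) := fun ζ hζ => by
    have hζ : p.eval ζ ≠ 0 := fun h0 =>
      (mem_ball.1 (hroots ζ ((mem_roots hp).2 h0))).ne (mem_sphere.1 hζ)
    simp only [eval_derivative_eq_mul_sum_inv_sub_roots IsAlgClosed.card_roots_eq_natDegree hζ]
    field_simp
  rw [circleIntegral.integral_congr hR hlogDeriv, circleIntegral_mul_sum_inv_sub hg hroots,
    inv_mul_cancel_left₀ two_pi_I_ne_zero]

theorem differentiableAt_circleIntegral_of_contDiffOn {H E : Type*} [NormedAddCommGroup H]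
    [NormedSpace ℂ H] [ProperSpace H] [NormedAddCommGroup E] [NormedSpace ℂ E] [CompleteSpace E]
    {G : H × ℂ → E} {U : Set (H × ℂ)} (hU : IsOpen U) (hG : ContDiffOn ℂ 1 G U)
    {s₀ : H} {c : ℂ} {R : ℝ} (hR : 0 ≤ R) (hs₀ : ∀ᶠ s in 𝓝 s₀, ∀ ζ ∈ sphere c R, (s, ζ) ∈ U) :
    DifferentiableAt ℂ (fun s => ∮ ζ in C(c, R), G (s, ζ)) s₀ := by
  obtain ⟨ε, hε, hεU⟩ := nhds_basis_closedBall.eventually_iff.1 hs₀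
  have hKU : closedBall s₀ ε ×ˢ sphere c R ⊆ U := fun p hp => hεU hp.1 p.2 hp.2
  have hmem : ∀ s ∈ closedBall s₀ ε, ∀ θ, (s, circleMap c R θ) ∈ U := fun s hs θ =>
    hKU ⟨hs, circleMap_mem_sphere c hR θ⟩
  set G' : H × ℂ → H →L[ℂ] E := fun p => (fderiv ℂ G p).comp (ContinuousLinearMap.inl ℂ H ℂ)
  have hG'_cont : ContinuousOn G' U :=
    (hG.continuousOn_fderiv_of_isOpen hU le_rfl).clm_comp continuousOn_const
  obtain ⟨C, hC⟩ := ((isCompact_closedBall s₀ ε).prod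
    (isCompact_sphere c R)).exists_bound_of_continuousOn (hG'_cont.mono hKU)
  have hG_partial : ∀ p ∈ U, HasFDerivAt (fun s => G (s, p.2)) (G' p) p.1 := fun p hp =>
    ((hG.differentiableOn one_ne_zero p hp).differentiableAt (hU.mem_nhds hp)).hasFDerivAt.comp p.1
      (hasFDerivAt_prodMk_left p.1 p.2)
  have hG_cont : ∀ s ∈ closedBall s₀ ε, Continuous fun θ => G (s, circleMap c R θ) := fun s hs =>
    hG.continuousOn.comp_continuous (by fun_prop) (hmem s hs)
  have hγ' : Continuous fun θ => circleMap 0 R θ * I := by fun_prop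
  simp only [circleIntegral, deriv_circleMap]
  refine (intervalIntegral.hasFDerivAt_integral_of_dominated_of_fderiv_le
    (F' := fun s θ => (circleMap 0 R θ * I) • G' (s, circleMap c R θ))
    (bound := fun _ => R * C) (closedBall_mem_nhds s₀ hε) ?_ ?_ ?_ ?_ intervalIntegrable_const
    ?_).differentiableAt
  · exact eventually_of_mem (closedBall_mem_nhds s₀ hε) fun s hs =>
      (hγ'.smul (hG_cont s hs)).aestronglyMeasurable
  · exact (hγ'.smul (hG_cont s₀ (mem_closedBall_self hε.le))).intervalIntegrable _ _
  · exact (hγ'.smul (hG'_cont.comp_continuous (by fun_prop)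
      (hmem s₀ (mem_closedBall_self hε.le)))).aestronglyMeasurable
  · refine Eventually.of_forall fun θ _ s hs => ?_
    rw [norm_smul, norm_mul, norm_circleMap_zero, norm_I, mul_one, abs_of_nonneg hR]
    exact mul_le_mul_of_nonneg_left (hC _ ⟨hs, circleMap_mem_sphere c hR θ⟩) hR
  · exact Eventually.of_forall fun θ _ s hs => (hG_partial _ (hmem s hs θ)).const_smul _

theorem norm_le_of_LP_eq_zero {k : ℕ} {s : Fin k → ℂ} {z : ℂ} (hz : LP k s z = 0) :
    ‖z‖ ≤ max 1 (∑ i, ‖s i‖) := by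
  rcases le_or_gt ‖z‖ 1 with hz1 | hz1
  · exact le_max_of_le_left hz1
  refine le_max_of_le_right ?_
  have hpow : ‖z‖ ^ k ≤ (∑ i, ‖s i‖) * ‖z‖ ^ (k - 1) := calc
    ‖z‖ ^ k = ‖∑ i : Fin k, (-1 : ℂ) ^ ((i : ℕ) + 1) * s i * z ^ (k - 1 - (i : ℕ))‖ := by
      rw [← norm_pow, eq_neg_of_add_eq_zero_left hz, norm_neg]
    _ ≤ ∑ i, ‖s i‖ * ‖z‖ ^ (k - 1) := norm_sum_le_of_le _ fun i _ => by
      simp only [norm_mul, norm_pow, norm_neg, norm_one, one_pow, one_mul]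
      exact mul_le_mul_of_nonneg_left (pow_le_pow_right₀ hz1.le (by omega)) (norm_nonneg _)
    _ = (∑ i, ‖s i‖) * ‖z‖ ^ (k - 1) := (Finset.sum_mul ..).symm
  cases k with
  | zero => norm_num at hpow
  | succ n =>
    rw [pow_succ, Nat.add_sub_cancel, mul_comm] at hpow
    exact le_of_mul_le_mul_right hpow (by positivity)

theorem eventually_forall_LP_eq_zero_norm_lt {k : ℕ} (s₀ : Fin k → ℂ) :
    ∀ᶠ s in 𝓝 s₀, ∀ z, LP k s z = 0 → ‖z‖ < max 1 (∑ i, ‖s₀ i‖) + 1 := by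
  have hcont : Continuous fun s : Fin k → ℂ => max 1 (∑ i, ‖s i‖) := by fun_prop
  filter_upwards [hcont.continuousAt.eventually_lt continuousAt_const (lt_add_one _)] with s hs z hz
  exact (norm_le_of_LP_eq_zero hz).trans_lt hs

def lpPoly (k : ℕ) (s : Fin k → ℂ) : ℂ[X] :=
  X ^ k + ∑ i : Fin k, C ((-1) ^ ((i : ℕ) + 1) * s i) * X ^ (k - 1 - (i : ℕ))

theorem eval_lpPoly (k : ℕ) (s : Fin k → ℂ) (z : ℂ) : (lpPoly k s).eval z = LP k s z := by
  simp [lpPoly, LP, eval_finsetSum]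

theorem eval_derivative_lpPoly (k : ℕ) (s : Fin k → ℂ) (z : ℂ) :
    (derivative (lpPoly k s)).eval z = LP' k s z := by
  simp only [lpPoly, derivative_add, derivative_X_pow, derivative_sum, derivative_C_mul_X_pow,
    eval_add, eval_mul, eval_pow, eval_C, eval_X, eval_finsetSum, LP']
  congr 1
  refine Finset.sum_congr rfl fun i _ => ?_
  rw [show k - 1 - (i : ℕ) - 1 = k - 2 - i by omega]
  ring

theorem degree_lpPoly_sub_X_pow_lt (k : ℕ) (s : Fin k → ℂ) :
    (lpPoly k s - X ^ k).degree < (k : WithBot ℕ) := by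
  rw [lpPoly, add_sub_cancel_left]
  refine (degree_sum_le _ _).trans_lt ((Finset.sup_lt_iff (WithBot.bot_lt_coe k)).2 fun i _ => ?_)
  have hi : k - 1 - (i : ℕ) < k := by have := i.isLt; omega
  exact (degree_C_mul_X_pow_le _ _).trans_lt (WithBot.coe_lt_coe.2 hi)

theorem monic_lpPoly (k : ℕ) (s : Fin k → ℂ) : (lpPoly k s).Monic := by
  simpa using monic_X_pow_add (degree_lpPoly_sub_X_pow_lt k s)

theorem natDegree_lpPoly (k : ℕ) (s : Fin k → ℂ) : (lpPoly k s).natDegree = k := by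
  rw [← add_sub_cancel (X ^ k) (lpPoly k s), natDegree_add_eq_left_of_degree_lt, natDegree_X_pow]
  simpa using degree_lpPoly_sub_X_pow_lt k s

theorem mem_roots_lpPoly {k : ℕ} {s : Fin k → ℂ} {z : ℂ} :
    z ∈ (lpPoly k s).roots ↔ LP k s z = 0 := by
  rw [mem_roots (monic_lpPoly k s).ne_zero, IsRoot, eval_lpPoly]

theorem sum_map_roots_lpPoly_eq_circleIntegral {k : ℕ} {g : ℂ → ℂ} (hg : Differentiable ℂ g)
    {s : Fin k → ℂ} {R : ℝ} (hR : 0 ≤ R) (hroots : ∀ z, LP k s z = 0 → ‖z‖ < R) :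
    ((lpPoly k s).roots.map g).sum =
      (2 * Real.pi * I)⁻¹ * ∮ ζ in C(0, R), g ζ * LP' k s ζ / LP k s ζ := by
  simp only [← eval_lpPoly, ← eval_derivative_lpPoly]
  exact (circleIntegral_mul_derivative_div_eq_sum_roots (monic_lpPoly k s).ne_zero hR
    hg.differentiableOn fun a ha => mem_ball_zero_iff.2 (hroots a (mem_roots_lpPoly.1 ha))).symm

theorem sum_map_roots_lpPoly_eq_sum_of_injective {k : ℕ} {g : ℂ → ℂ} {s z : Fin k → ℂ}
    (hz : Function.Injective z) (hroots : ∀ j, LP k s (z j) = 0) :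
    ((lpPoly k s).roots.map g).sum = ∑ j, g (z j) := by
  rw [roots_eq_map_of_injective (monic_lpPoly k s).ne_zero (by simp [natDegree_lpPoly]) hz
    fun j => (eval_lpPoly k s (z j)).trans (hroots j), Multiset.map_map]
  rfl

theorem differentiableAt_sum_map_roots_lpPoly {k : ℕ} {g : ℂ → ℂ} (hg : Differentiable ℂ g)
    (s₀ : Fin k → ℂ) : DifferentiableAt ℂ (fun s => ((lpPoly k s).roots.map g).sum) s₀ := by
  have hR : 0 ≤ max 1 (∑ i, ‖s₀ i‖) + 1 := by positivity
  have hroots := eventually_forall_LP_eq_zero_norm_lt s₀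
  have hLP : ContDiff ℂ 1 fun p : (Fin k → ℂ) × ℂ => LP k p.1 p.2 := by unfold LP; fun_prop
  have hLP' : ContDiff ℂ 1 fun p : (Fin k → ℂ) × ℂ => LP' k p.1 p.2 := by unfold LP'; fun_prop
  have hG : ContDiffOn ℂ 1 (fun p : (Fin k → ℂ) × ℂ => g p.2 * LP' k p.1 p.2 / LP k p.1 p.2)
      {p | LP k p.1 p.2 ≠ 0} :=
    ((hg.contDiff.comp contDiff_snd).mul hLP').contDiffOn.div hLP.contDiffOn fun _ hp => hp
  refine ((differentiableAt_circleIntegral_of_contDiffOn (isOpen_ne_fun hLP.continuous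
    continuous_const) hG hR (hroots.mono fun s hs ζ hζ h0 => (hs ζ h0).ne
      (mem_sphere_zero_iff_norm.1 hζ))).const_mul (2 * Real.pi * I)⁻¹).congr_of_eventuallyEq ?_
  exact hroots.mono fun s hs => sum_map_roots_lpPoly_eq_circleIntegral hg hR hs

theorem lisbon_Psi_well_defined_holomorphic_and_sum_over_roots_general
    (k : ℕ) (f : ℂ → ℂ) (hf : Differentiable ℂ f) :
    ∃ Ψ : (Fin k → ℂ) → Fin k → ℂ, Differentiable ℂ Ψ ∧
      (∀ (s : Fin k → ℂ) (R : ℝ), 0 < R →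
        (∀ z : ℂ, LP k s z = 0 → ‖z‖ < R) →
        ∀ h : Fin k,
          Ψ s h = (2 * Real.pi * Complex.I)⁻¹ *
            ∮ ζ in C(0, R), f ζ * ζ ^ (h : ℕ) * LP' k s ζ / LP k s ζ) ∧
      (∀ (s : Fin k → ℂ) (z : Fin k → ℂ), Function.Injective z →
        (∀ j : Fin k, LP k s (z j) = 0) →
        ∀ h : Fin k, Ψ s h = ∑ j : Fin k, (z j) ^ (h : ℕ) * f (z j)) := by
  have hg (h : ℕ) : Differentiable ℂ fun a => f a * a ^ h := hf.mul (differentiable_pow h)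
  refine ⟨fun s h => ((lpPoly k s).roots.map fun a => f a * a ^ (h : ℕ)).sum, ?_, ?_, ?_⟩
  · exact differentiable_pi.2 fun h => differentiableAt_sum_map_roots_lpPoly (hg h)
  · exact fun s R hR hroots h => sum_map_roots_lpPoly_eq_circleIntegral (hg h) hR.le hroots
  · exact fun s z hz hroots h => (sum_map_roots_lpPoly_eq_sum_of_injective hz hroots).trans
      (Finset.sum_congr rfl fun j _ => mul_comm _ _)

/-- `Ψ_f` is a well-defined (independent of the admissible radius `R`)
vector-valued holomorphic function on `ℂ^k`, and where `P_s` has `k` pairwise distinct roots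
`z_1, …, z_k` its `h`-th component is `ψ_h(s) = Σ_j z_j^h f(z_j)`. -/
theorem lisbon_Psi_well_defined_holomorphic_and_sum_over_roots
    (k : ℕ) (hk : 2 ≤ k) (f : ℂ → ℂ) (hf : Differentiable ℂ f) :
    ∃ Ψ : (Fin k → ℂ) → Fin k → ℂ, Differentiable ℂ Ψ ∧
      (∀ (s : Fin k → ℂ) (R : ℝ), 0 < R →
        (∀ z : ℂ, LP k s z = 0 → ‖z‖ < R) →
        ∀ h : Fin k,
          Ψ s h = (2 * Real.pi * Complex.I)⁻¹ *
            ∮ ζ in C(0, R), f ζ * ζ ^ (h : ℕ) * LP' k s ζ / LP k s ζ) ∧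
      (∀ (s : Fin k → ℂ) (z : Fin k → ℂ), Function.Injective z →
        (∀ j : Fin k, LP k s (z j) = 0) →
        ∀ h : Fin k, Ψ s h = ∑ j : Fin k, (z j) ^ (h : ℕ) * f (z j)) :=
  lisbon_Psi_well_defined_holomorphic_and_sum_over_roots_general k f hf
end
end

section
/- If the entire function f is not identically zero, then the Lisbon integral Φ_f is not identically zero as a function on ℂ^k, and likewise Ψ_f is not identically zero on ℂ^k. -/
open Matrix Complex

noncomputable section

/-!
Take `s = (w, 0, …, 0)` with `w ≠ 0` and `f w ≠ 0`, so that `P_s(z) = z^(k-1) (z - w)` and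
`z P'_s(z) = z^(k-1) (k z - (k-1) w)`. On a circle enclosing `0` and `w` the integrand of the
component `h = k-1` of `Φ_f(s)` is then `f ζ / (ζ - w)`, and that of the component `h = 1` of
`Ψ_f(s)` is `g ζ / (ζ - w)` with the entire function `g ζ = f ζ (k ζ - (k-1) w)`. By Cauchy's
integral formula these components are `f w` and `g w = w f w`, both nonzero.
-/

open Metric Filter Topology

theorem ContinuousAt.exists_ne_apply_ne {X Y : Type*} [TopologicalSpace X] [T1Space X]
    [TopologicalSpace Y] [T1Space Y] {f : X → Y} {w : X} [NeBot (𝓝[≠] w)] {b : Y}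
    (hf : ContinuousAt f w) (hw : f w ≠ b) (a : X) : ∃ z, z ≠ a ∧ f z ≠ b := by
  obtain ⟨z, hz, hza⟩ :=
    ((infinite_of_mem_nhds w (hf.eventually_ne hw)).sdiff (Set.finite_singleton a)).nonempty
  exact ⟨z, hza, hz⟩

theorem LP_pi_single_zero (m : ℕ) (w z : ℂ) :
    LP (m + 1) (Pi.single 0 w) z = z ^ m * (z - w) := by
  rw [LP, Fintype.sum_eq_single 0 fun i hi => by simp [hi]]
  simp
  ring

theorem LP'_pi_single_zero (m : ℕ) (w z : ℂ) :
    LP' (m + 2) (Pi.single 0 w) z = z ^ m * ((m + 2) * z - (m + 1) * w) := by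
  rw [LP', Fintype.sum_eq_single 0 fun i hi => by simp [hi]]
  simp
  ring

theorem norm_lt_of_LP_pi_single_zero_eq_zero {m : ℕ} {R : ℝ} {w z : ℂ} (hR : 0 < R)
    (hw : ‖w‖ < R) (hz : LP (m + 1) (Pi.single 0 w) z = 0) : ‖z‖ < R := by
  rcases mul_eq_zero.1 ((LP_pi_single_zero m w z).symm.trans hz) with h | h
  · rwa [eq_zero_of_pow_eq_zero h, norm_zero]
  · rwa [sub_eq_zero.1 h]

section CircleIntegral

variable {f : ℂ → ℂ} {R : ℝ} {w : ℂ}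

theorem ne_zero_and_ne_of_mem_sphere {ζ : ℂ} (hw : ‖w‖ < R) (hζ : ζ ∈ sphere (0 : ℂ) R) :
    ζ ≠ 0 ∧ ζ ≠ w := by
  rw [mem_sphere_zero_iff_norm] at hζ
  constructor <;> rintro rfl
  · simp only [norm_zero] at hζ
    linarith [norm_nonneg w]
  · linarith

theorem inv_two_pi_I_mul_circleIntegral_div_sub (hf : Differentiable ℂ f) (hw : ‖w‖ < R) :
    (2 * Real.pi * I)⁻¹ * ∮ ζ in C(0, R), f ζ / (ζ - w) = f w := by
  rw [circleIntegral_div_sub_of_differentiable_on_off_countable Set.countable_empty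
    (mem_ball_zero_iff.2 hw) hf.continuous.continuousOn fun z _ => hf z, ← mul_assoc,
    inv_mul_cancel₀ two_pi_I_ne_zero, one_mul]

theorem inv_two_pi_I_mul_circleIntegral_mul_pow_div_LP_pi_single_zero (hf : Differentiable ℂ f)
    (hw : ‖w‖ < R) (m : ℕ) :
    (2 * Real.pi * I)⁻¹ * ∮ ζ in C(0, R), f ζ * ζ ^ m / LP (m + 1) (Pi.single 0 w) ζ = f w := by
  rw [← inv_two_pi_I_mul_circleIntegral_div_sub hf hw]
  congr 1
  refine circleIntegral.integral_congr ((norm_nonneg w).trans hw.le) fun ζ hζ => ?_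
  obtain ⟨hζ0, hζw⟩ := ne_zero_and_ne_of_mem_sphere hw hζ
  have := sub_ne_zero.2 hζw
  simp only [LP_pi_single_zero]
  field_simp

theorem inv_two_pi_I_mul_circleIntegral_mul_LP'_div_LP_pi_single_zero (hf : Differentiable ℂ f)
    (hw : ‖w‖ < R) (m : ℕ) :
    (2 * Real.pi * I)⁻¹ * ∮ ζ in C(0, R),
      f ζ * ζ ^ 1 * LP' (m + 2) (Pi.single 0 w) ζ / LP (m + 2) (Pi.single 0 w) ζ = w * f w := by
  have hg : Differentiable ℂ fun ζ => f ζ * ((m + 2) * ζ - (m + 1) * w) := by fun_prop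
  rw [show w * f w = f w * ((m + 2) * w - (m + 1) * w) by ring,
    ← inv_two_pi_I_mul_circleIntegral_div_sub hg hw]
  congr 1
  refine circleIntegral.integral_congr ((norm_nonneg w).trans hw.le) fun ζ hζ => ?_
  obtain ⟨hζ0, hζw⟩ := ne_zero_and_ne_of_mem_sphere hw hζ
  have := sub_ne_zero.2 hζw
  simp only [LP'_pi_single_zero, LP_pi_single_zero]
  field_simp
  ring

end CircleIntegral

/-- if the entire function `f` is not identically zero then neither `Φ_f`
nor `Ψ_f` is identically zero on `ℂ^k`. -/
theorem lisbon_Phi_Psi_nonzero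
    (k : ℕ) (hk : 2 ≤ k) (f : ℂ → ℂ) (hf : Differentiable ℂ f)
    (hf0 : ∃ w : ℂ, f w ≠ 0)
    (Φ Ψ : (Fin k → ℂ) → Fin k → ℂ)
    (hΦ : ∀ (s : Fin k → ℂ) (R : ℝ), 0 < R →
      (∀ z : ℂ, LP k s z = 0 → ‖z‖ < R) →
      ∀ h : Fin k,
        Φ s h = (2 * Real.pi * Complex.I)⁻¹ *
          ∮ ζ in C(0, R), f ζ * ζ ^ (h : ℕ) / LP k s ζ)
    (hΨ : ∀ (s : Fin k → ℂ) (R : ℝ), 0 < R →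
      (∀ z : ℂ, LP k s z = 0 → ‖z‖ < R) →
      ∀ h : Fin k,
        Ψ s h = (2 * Real.pi * Complex.I)⁻¹ *
          ∮ ζ in C(0, R), f ζ * ζ ^ (h : ℕ) * LP' k s ζ / LP k s ζ) :
    (∃ s : Fin k → ℂ, Φ s ≠ 0) ∧ (∃ s : Fin k → ℂ, Ψ s ≠ 0) := by
  obtain ⟨w₀, hfw₀⟩ := hf0
  obtain ⟨w, hw0, hfw⟩ := (hf w₀).continuousAt.exists_ne_apply_ne hfw₀ 0
  obtain ⟨m, rfl⟩ : ∃ m, k = m + 2 := ⟨k - 2, by omega⟩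
  have hR : 0 < ‖w‖ + 1 := by positivity
  have hwR : ‖w‖ < ‖w‖ + 1 := lt_add_one _
  have hroots : ∀ z, LP (m + 2) (Pi.single 0 w) z = 0 → ‖z‖ < ‖w‖ + 1 := fun _ =>
    norm_lt_of_LP_pi_single_zero_eq_zero hR hwR
  refine ⟨⟨Pi.single 0 w, fun hΦ0 => hfw ?_⟩, ⟨Pi.single 0 w, fun hΨ0 => mul_ne_zero hw0 hfw ?_⟩⟩
  · have := congrFun hΦ0 (Fin.last (m + 1))
    rwa [hΦ _ _ hR hroots, Fin.val_last,
      inv_two_pi_I_mul_circleIntegral_mul_pow_div_LP_pi_single_zero hf hwR] at this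
  · have := congrFun hΨ0 1
    rwa [hΨ _ _ hR hroots, Fin.val_one,
      inv_two_pi_I_mul_circleIntegral_mul_LP'_div_LP_pi_single_zero hf hwR] at this
end
end

section
/- If Φ : ℂ^k → ℂ^k is a holomorphic solution of the system (@), then s ↦ A(s)Φ(s) is also a solution of (@). -/
/-!
`A(s)` is affine in `s` and `∂A/∂s_p` only touches the last row:
`(∂A/∂s_p) w = (−1)^(p−1) w_(k−p+1) e_k`. So by the product rule, for `Ψ = AΦ` and
`A^(k−h) Ψ = A (A^(k−h) Φ)`, each side of (@) is `A` applied to the corresponding side of (@)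
for `Φ`, plus a multiple of `e_k`. The multiples agree because the first row of `A^m` is
`e_(m+1)ᵀ` for `m < k`, so `(A^(k−h) Φ)_1 = Φ_(k−h+1)`.
-/

open Matrix Complex

noncomputable section

/-- The companion matrix `A(s)` of `P_s(z) = Σ_{h=0}^{k} (−1)^h s_h z^{k−h}` (with `s_0 = 1`):
`A(s)_{i,i+1} = 1` for `1 ≤ i ≤ k−1`, the last row is `((−1)^{k−1} s_k, …, s_1)`
(here `0`-indexed: `s i` is `s_{i+1}`). -/
def LcompA (k : ℕ) (s : Fin k → ℂ) : Matrix (Fin k) (Fin k) ℂ := fun i j =>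
  if (i : ℕ) = k - 1 then
    (-1 : ℂ) ^ (k - 1 - (j : ℕ)) * s ⟨k - 1 - (j : ℕ), by have := j.isLt; omega⟩
  else if (j : ℕ) = (i : ℕ) + 1 then 1 else 0

/-- The system (@) at a point `s`: `(−1)^{k+h} ∂Φ/∂s_h = ∂(A(s)^{k−h} Φ)/∂s_k`
for every `h ∈ {1, …, k−1}` (partial derivatives as directional derivatives along
the coordinate directions). -/
def SatA (k : ℕ) (Φ : (Fin k → ℂ) → Fin k → ℂ) (s : Fin k → ℂ) : Prop :=
  ∀ h : ℕ, ∀ _h1 : 1 ≤ h, ∀ _h2 : h ≤ k - 1,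
    ((-1 : ℂ) ^ (k + h)) •
        fderiv ℂ Φ s (Pi.single (⟨h - 1, by omega⟩ : Fin k) (1 : ℂ))
      = fderiv ℂ (fun t => (LcompA k t ^ (k - h)) *ᵥ Φ t) s
          (Pi.single (⟨k - 1, by omega⟩ : Fin k) (1 : ℂ))

section MulVec

variable {𝕜 E m n : Type*} [NontriviallyNormedField 𝕜] [NormedAddCommGroup E] [NormedSpace 𝕜 E]
  [Fintype n] {M : E → Matrix m n 𝕜} {v : E → n → 𝕜} {x : E}

theorem fderiv_apply_apply {ι : Type*} {F : E → ι → 𝕜} (hF : DifferentiableAt 𝕜 F x)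
    (d : E) (i : ι) : fderiv 𝕜 F x d i = fderiv 𝕜 (fun t => F t i) x d := by
  rw [fderiv_apply hF i]; rfl

theorem DifferentiableAt.mulVec (hM : ∀ i j, DifferentiableAt 𝕜 (fun t => M t i j) x)
    (hv : DifferentiableAt 𝕜 v x) : DifferentiableAt 𝕜 (fun t => M t *ᵥ v t) x := by
  rw [differentiableAt_pi] at hv ⊢
  intro i
  simp only [Matrix.mulVec, dotProduct]
  fun_prop

theorem fderiv_mulVec (hM : ∀ i j, DifferentiableAt 𝕜 (fun t => M t i j) x)
    (hv : DifferentiableAt 𝕜 v x) (d : E) :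
    fderiv 𝕜 (fun t => M t *ᵥ v t) x d =
      Matrix.of (fun i j => fderiv 𝕜 (fun t => M t i j) x d) *ᵥ v x + M x *ᵥ fderiv 𝕜 v x d := by
  have hvj := differentiableAt_pi.mp hv
  ext i
  rw [fderiv_apply_apply (hv.mulVec hM)]
  simp only [Matrix.mulVec, dotProduct, Pi.add_apply, Matrix.of_apply]
  rw [fderiv_fun_sum fun j _ => (hM i j).fun_mul (hvj j), ← Finset.sum_add_distrib]
  simp only [_root_.sum_apply]
  refine Finset.sum_congr rfl fun j _ => ?_
  rw [fderiv_fun_mul (hM i j) (hvj j), fderiv_apply_apply hv]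
  simp only [_root_.add_apply, _root_.smul_apply, smul_eq_mul]
  ring

end MulVec

variable {k : ℕ}

theorem LcompA_mulVec_apply_of_lt (s w : Fin k → ℂ) (i : Fin k) (hi : (i : ℕ) + 1 < k) :
    (LcompA k s *ᵥ w) i = w ⟨i + 1, hi⟩ := by
  have hne : (i : ℕ) ≠ k - 1 := by omega
  simp only [Matrix.mulVec, dotProduct, LcompA, hne, if_false, ite_mul, one_mul, zero_mul]
  rw [Finset.sum_eq_single ⟨i + 1, hi⟩ (fun j _ hj => if_neg fun h => hj (Fin.ext h))
    (by simp)]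
  simp

theorem LcompA_pow_mulVec_apply_of_lt (s w : Fin k → ℂ) (m : ℕ) (i : Fin k)
    (hi : (i : ℕ) + m < k) : (LcompA k s ^ m *ᵥ w) i = w ⟨i + m, hi⟩ := by
  induction m generalizing w with
  | zero => simp
  | succ m ih =>
    rw [pow_succ, ← Matrix.mulVec_mulVec, ih _ (by omega),
      LcompA_mulVec_apply_of_lt _ _ _ (by simp; omega)]
    rfl

theorem differentiable_LcompA_apply (i j : Fin k) : Differentiable ℂ fun t => LcompA k t i j := by
  unfold LcompA
  split_ifs <;> fun_prop

theorem fderiv_LcompA_apply (s d : Fin k → ℂ) (i j : Fin k) :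
    fderiv ℂ (fun t => LcompA k t i j) s d = LcompA k d i j - LcompA k 0 i j := by
  unfold LcompA
  split_ifs
  · rw [((hasFDerivAt_apply _ s).const_mul _).fderiv]
    simp
  all_goals simp [fderiv_const_apply]

theorem fderiv_LcompA_mulVec {F : (Fin k → ℂ) → Fin k → ℂ} {s : Fin k → ℂ}
    (hF : DifferentiableAt ℂ F s) (d : Fin k → ℂ) :
    fderiv ℂ (fun t => LcompA k t *ᵥ F t) s d =
      (LcompA k d - LcompA k 0) *ᵥ F s + LcompA k s *ᵥ fderiv ℂ F s d := by
  rw [fderiv_mulVec (fun i j => (differentiable_LcompA_apply i j).differentiableAt) hF]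
  congr 2
  ext i j
  exact fderiv_LcompA_apply s d i j

theorem LcompA_single_sub_LcompA_zero_mulVec (p l : Fin k) (hl : (l : ℕ) = k - 1)
    (w : Fin k → ℂ) :
    (LcompA k (Pi.single p 1) - LcompA k 0) *ᵥ w = Pi.single l ((-1) ^ (p : ℕ) * w p.rev) := by
  ext i
  by_cases hi : i = l
  · subst hi
    simp only [Matrix.mulVec, dotProduct, Matrix.sub_apply, LcompA, hl, if_true, Pi.zero_apply,
      mul_zero, sub_zero, Pi.single_eq_same]
    rw [Finset.sum_eq_single p.rev]
    · rw [show (⟨k - 1 - p.rev, by omega⟩ : Fin k) = p from Fin.ext (by simp; omega)]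
      simp [show k - 1 - (k - (p + 1)) = (p : ℕ) by omega]
    · intro j _ hj
      rw [Pi.single_eq_of_ne (fun h => hj (by rw [← h]; ext; simp; omega)), mul_zero, zero_mul]
    · simp
  · have hi' : (i : ℕ) ≠ k - 1 := fun h => hi (Fin.ext (h.trans hl.symm))
    simp [Matrix.mulVec, dotProduct, LcompA, hi', hi]

theorem differentiable_LcompA_pow_mulVec {F : (Fin k → ℂ) → Fin k → ℂ} (hF : Differentiable ℂ F)
    (m : ℕ) : Differentiable ℂ fun t => LcompA k t ^ m *ᵥ F t := by
  induction m with
  | zero => simpa using hF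
  | succ m ih =>
    simp only [pow_succ', ← Matrix.mulVec_mulVec]
    exact fun s => (ih s).mulVec fun i j => (differentiable_LcompA_apply i j).differentiableAt

theorem companion_preserves_solutions_general
    (k : ℕ) (Φ : (Fin k → ℂ) → Fin k → ℂ)
    (hΦdiff : Differentiable ℂ Φ) (hΦsol : ∀ s : Fin k → ℂ, SatA k Φ s) :
    ∀ s : Fin k → ℂ, SatA k (fun t => LcompA k t *ᵥ Φ t) s := by
  intro s h h1 h2
  have hpow_comm : (fun t => LcompA k t ^ (k - h) *ᵥ (LcompA k t *ᵥ Φ t)) =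
      fun t => LcompA k t *ᵥ (LcompA k t ^ (k - h) *ᵥ Φ t) := by
    simp only [Matrix.mulVec_mulVec, pow_mul_comm']
  rw [hpow_comm, fderiv_LcompA_mulVec (hΦdiff s),
    fderiv_LcompA_mulVec (differentiable_LcompA_pow_mulVec hΦdiff _ s), ← hΦsol s h h1 h2,
    LcompA_single_sub_LcompA_zero_mulVec _ ⟨k - 1, by omega⟩ rfl,
    LcompA_single_sub_LcompA_zero_mulVec _ ⟨k - 1, by omega⟩ rfl,
    LcompA_pow_mulVec_apply_of_lt _ _ _ _ (by simp; omega), smul_add, Matrix.mulVec_smul,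
    ← Pi.single_smul]
  congr 2
  have hidx : (⟨h - 1, by omega⟩ : Fin k).rev =
      ⟨(⟨k - 1, by omega⟩ : Fin k).rev + (k - h), by simp; omega⟩ := Fin.ext (by simp; omega)
  have hsign : k + h + (h - 1) = k - 1 + 2 * h := by omega
  rw [hidx, smul_eq_mul, ← mul_assoc]
  congr 1
  rw [Fin.val_mk, Fin.val_mk, ← pow_add, hsign, pow_add, pow_mul]
  simp

/-- if `Φ` is a holomorphic solution of the system (@) on `ℂ^k`, then
`s ↦ A(s) Φ(s)` is also a solution of (@). -/
theorem companion_preserves_solutions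
    (k : ℕ) (hk : 2 ≤ k) (Φ : (Fin k → ℂ) → Fin k → ℂ)
    (hΦdiff : Differentiable ℂ Φ) (hΦsol : ∀ s : Fin k → ℂ, SatA k Φ s) :
    ∀ s : Fin k → ℂ, SatA k (fun t => LcompA k t *ᵥ Φ t) s :=
  companion_preserves_solutions_general k Φ hΦdiff hΦsol
end
end

section
/- The system (@) is integrable: if Φ : ℂ^k → ℂ^k is a holomorphic solution of (@), then for all h, j ∈ {1,…,k−1} one has (−1)^{h+j} ∂²Φ/(∂s_j ∂s_h) = ∂²(A(s)^{2k−h−j} Φ)/∂s_k²; in particular the mixed second derivative ∂²Φ/(∂s_j ∂s_h) computed via (@) depends only on h + j and is symmetric in (h, j). -/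
/-!
Write `∂_h` for `∂/∂s_h` and `Φ_m := A^m Φ`. Since `A` is affine in `s` and the first row of `A^p`
is the `(p+1)`-st unit row, `∂_j A = (−1)^{k+j} (∂_k A) A^{k−j}`; with the Leibniz rule this turns
the system `∂_j Φ = (−1)^{k+j} ∂_k Φ_{k−j}` into `∂_j Φ_m = (−1)^{k+j} ∂_k Φ_{m+k−j}` for every `m`.
Hence `∂_j ∂_h Φ = (−1)^{k+h} ∂_j ∂_k Φ_{k−h} = (−1)^{k+h} ∂_k ∂_j Φ_{k−h}
= (−1)^{h+j} ∂_k² Φ_{2k−h−j}`. Swapping `∂_j` and `∂_k` needs `Φ_{k−h}` to be `C²`: a holomorphic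
map on `ℂⁿ` is `C^∞`, because by Cauchy's formula on complex lines its directional derivatives are
circle integrals of the map itself, which may be differentiated under the integral sign thanks to
Cauchy's estimates.
-/

open Matrix Complex

noncomputable section

open Metric Real

section SeveralComplexVariables

variable {E F : Type*} [NormedAddCommGroup E] [NormedSpace ℂ E] [NormedAddCommGroup F]
  [NormedSpace ℂ F] {f : E → F}

theorem Differentiable.comp_add_smul (hf : Differentiable ℂ f) (x v : E) :
    Differentiable ℂ fun z : ℂ => f (x + z • v) :=
  hf.comp ((differentiable_id.smul_const v).const_add x)

theorem norm_fderiv_le_of_forall_mem_closedBall_norm_le (hf : Differentiable ℂ f) {x : E}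
    {r C : ℝ} (hr : 0 < r) (hC : ∀ y ∈ closedBall x r, ‖f y‖ ≤ C) :
    ‖fderiv ℂ f x‖ ≤ C / r := by
  have hC₀ : 0 ≤ C := (norm_nonneg _).trans (hC x (mem_closedBall_self hr.le))
  refine ContinuousLinearMap.opNorm_le_bound _ (by positivity) fun v => ?_
  rcases eq_or_ne v 0 with rfl | hv
  · simp
  have hv₀ : 0 < ‖v‖ := norm_pos_iff.2 hv
  -- Cauchy's estimate on the complex line through `x` in direction `v`, on the disc of radius
  -- `r / ‖v‖`, which is mapped into `closedBall x r`.
  calc ‖fderiv ℂ f x v‖ = ‖deriv (fun z : ℂ => f (x + z • v)) 0‖ := by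
        rw [← (hf x).lineDeriv_eq_fderiv, lineDeriv]
    _ ≤ C / (r / ‖v‖) := by
        refine norm_deriv_le_of_forall_mem_sphere_norm_le (by positivity)
          (hf.comp_add_smul x v).diffContOnCl
          fun z hz => hC _ ?_
        rw [mem_sphere_zero_iff_norm] at hz
        rw [mem_closedBall_iff_norm, add_sub_cancel_left, norm_smul, hz,
          div_mul_cancel₀ _ hv₀.ne']
    _ = C / r * ‖v‖ := by field_simp

theorem exists_norm_fderiv_le_on_ball [ProperSpace E] (hf : Differentiable ℂ f) (x : E) (r : ℝ) :
    ∃ M, ∀ y ∈ ball x r, ‖fderiv ℂ f y‖ ≤ M := by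
  obtain ⟨C, hC⟩ := (isCompact_closedBall x (r + 1)).exists_bound_of_continuousOn
    hf.continuous.continuousOn
  refine ⟨C, fun y hy => ?_⟩
  simpa using norm_fderiv_le_of_forall_mem_closedBall_norm_le hf one_pos fun z hz =>
    hC z (closedBall_subset_closedBall' (by rw [mem_ball] at hy; linarith) hz)

theorem fderiv_apply_eq_circleIntegral [CompleteSpace F] (hf : Differentiable ℂ f) (x v : E) :
    fderiv ℂ f x v = (2 * π * I)⁻¹ • ∮ z in C(0, 1), (1 / (z - 0) ^ 2) • f (x + z • v) := by
  rw [(hf.comp_add_smul x v).differentiableOn.deriv_eq_smul_circleIntegral one_pos,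
    inv_smul_smul₀ two_pi_I_ne_zero, ← (hf x).lineDeriv_eq_fderiv, lineDeriv]

variable [FiniteDimensional ℂ E] [CompleteSpace F] [SecondCountableTopology F]

theorem differentiable_intervalIntegral_smul_comp_add (hf : Differentiable ℂ f) {c : ℝ → ℂ}
    (hc : Continuous c) {γ : ℝ → E} (hγ : Continuous γ) (a b : ℝ) :
    Differentiable ℂ fun x => ∫ θ in a..b, c θ • f (x + γ θ) := by
  intro x₀
  borelize E
  obtain ⟨C, hC⟩ := isCompact_uIcc.exists_bound_of_continuousOn hc.continuousOn
  obtain ⟨G, hG⟩ := isCompact_uIcc.exists_bound_of_continuousOn hγ.continuousOn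
  obtain ⟨M, hM⟩ := exists_norm_fderiv_le_on_ball hf x₀ (1 + G)
  have hcont (x : E) : Continuous fun θ => c θ • f (x + γ θ) := by
    have := hf.continuous
    fun_prop
  refine (intervalIntegral.hasFDerivAt_integral_of_dominated_of_fderiv_le (a := a) (b := b)
    (F' := fun x θ => c θ • fderiv ℂ f (x + γ θ)) (bound := fun _ => C * M)
    (ball_mem_nhds x₀ one_pos) (.of_forall fun x => (hcont x).aestronglyMeasurable)
    ((hcont x₀).intervalIntegrable _ _) ?_ ?_ intervalIntegrable_const ?_).differentiableAt
  · exact hc.aestronglyMeasurable.smul ((measurable_fderiv ℂ f).comp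
      (by fun_prop : Measurable fun θ => x₀ + γ θ)).aestronglyMeasurable
  · refine .of_forall fun θ hθ x hx => ?_
    replace hθ := Set.uIoc_subset_uIcc hθ
    rw [norm_smul]
    refine mul_le_mul (hC θ hθ) (hM _ ?_) (norm_nonneg _) ((norm_nonneg _).trans (hC θ hθ))
    rw [mem_ball, dist_eq_norm] at hx ⊢
    calc ‖x + γ θ - x₀‖ = ‖(x - x₀) + γ θ‖ := by rw [add_sub_right_comm]
      _ ≤ ‖x - x₀‖ + ‖γ θ‖ := norm_add_le _ _
      _ < 1 + G := by linarith [hG θ hθ]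
  · exact .of_forall fun θ _ x _ =>
      ((hf _).hasFDerivAt.comp x ((hasFDerivAt_id x).add_const (γ θ))).const_smul (c θ)

theorem Differentiable.differentiable_fderiv_apply (hf : Differentiable ℂ f) (v : E) :
    Differentiable ℂ fun x => fderiv ℂ f x v := by
  have hcircle : ∀ θ, circleMap 0 1 θ ≠ 0 := fun θ => circleMap_ne_center one_ne_zero
  simp_rw [fderiv_apply_eq_circleIntegral hf, circleIntegral, smul_smul]
  refine (differentiable_intervalIntegral_smul_comp_add hf ?_ (by fun_prop) _ _).const_smul _
  simp only [deriv_circleMap, sub_zero]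
  exact (by fun_prop : Continuous fun θ => circleMap 0 1 θ * I).mul
    (continuous_const.div ((continuous_circleMap 0 1).pow 2) fun θ => pow_ne_zero 2 (hcircle θ))

theorem Differentiable.contDiff_of_finiteDimensional (hf : Differentiable ℂ f) (n : ℕ) :
    ContDiff ℂ n f := by
  induction n generalizing f with
  | zero => exact contDiff_zero.2 hf.continuous
  | succ n ih =>
    rw [Nat.cast_succ, contDiff_succ_iff_fderiv_apply]
    exact ⟨hf, by simp, fun v => ih (hf.differentiable_fderiv_apply v)⟩

end SeveralComplexVariables

section Symmetry

variable {𝕜 E F : Type*} [NontriviallyNormedField 𝕜] [IsRCLikeNormedField 𝕜]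
  [NormedAddCommGroup E] [NormedSpace 𝕜 E] [NormedAddCommGroup F] [NormedSpace 𝕜 F] {f : E → F}

theorem ContDiff.fderiv_fderiv_apply_comm (hf : ContDiff 𝕜 2 f) (x v w : E) :
    fderiv 𝕜 (fun y => fderiv 𝕜 f y v) x w = fderiv 𝕜 (fun y => fderiv 𝕜 f y w) x v := by
  have hf' : Differentiable 𝕜 (fderiv 𝕜 f) :=
    (hf.fderiv_right (m := 1) (by norm_num)).differentiable one_ne_zero
  have happly (u : E) :
      fderiv 𝕜 (fun y => fderiv 𝕜 f y u) x = (fderiv 𝕜 (fderiv 𝕜 f) x).flip u := by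
    simp [fderiv_clm_apply (hf' x) (differentiableAt_const u)]
  rw [happly, happly, ContinuousLinearMap.flip_apply, ContinuousLinearMap.flip_apply]
  exact second_derivative_symmetric (fun y => (hf.differentiable two_ne_zero y).hasFDerivAt)
    (hf' x).hasFDerivAt w v

end Symmetry

section PowerRelation

variable {𝕜 E F : Type*} [NontriviallyNormedField 𝕜] [NormedAddCommGroup E] [NormedSpace 𝕜 E]
  [NormedAddCommGroup F] [NormedSpace 𝕜 F] {T : E → F →L[𝕜] F} {φ : E → F} {s v w : E} {c : 𝕜}
  {n : ℕ}

theorem fderiv_pow_apply_eq_smul_mul (hT : DifferentiableAt 𝕜 T s)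
    (hTvw : fderiv 𝕜 T s v = c • (fderiv 𝕜 T s w * T s ^ n)) (m : ℕ) :
    fderiv 𝕜 (fun u => T u ^ m) s v = c • (fderiv 𝕜 (fun u => T u ^ m) s w * T s ^ n) := by
  induction m with
  | zero => simp
  | succ m ih =>
    simp_rw [pow_succ]
    rw [fderiv_fun_mul' (hT.fun_pow m) hT]
    simp only [_root_.add_apply, _root_.smul_apply, smul_eq_mul,
      MulOpposite.smul_eq_mul_unop, MulOpposite.unop_op]
    rw [hTvw, ih, mul_smul_comm, smul_mul_assoc, ← smul_add]
    simp only [add_mul, mul_assoc, pow_mul_comm']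

theorem fderiv_pow_apply_apply_eq_smul (hT : DifferentiableAt 𝕜 T s)
    (hφ : DifferentiableAt 𝕜 φ s)
    (hTvw : fderiv 𝕜 T s v = c • (fderiv 𝕜 T s w * T s ^ n))
    (hφvw : fderiv 𝕜 φ s v = c • fderiv 𝕜 (fun u => (T u ^ n) (φ u)) s w) (m : ℕ) :
    fderiv 𝕜 (fun u => (T u ^ m) (φ u)) s v
      = c • fderiv 𝕜 (fun u => (T u ^ (m + n)) (φ u)) s w := by
  simp_rw [pow_add, mul_apply_eq_comp]
  rw [fderiv_clm_apply (hT.fun_pow m) hφ,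
    fderiv_clm_apply (hT.fun_pow m) ((hT.fun_pow n).clm_apply hφ)]
  simp only [_root_.add_apply, ContinuousLinearMap.coe_comp, Function.comp_apply,
    ContinuousLinearMap.flip_apply]
  rw [hφvw, fderiv_pow_apply_eq_smul_mul hT hTvw m]
  simp [smul_add]

end PowerRelation

def Matrix.toCLM' {n : Type*} [Fintype n] [DecidableEq n] :
    Matrix n n ℂ ≃ₐ[ℂ] ((n → ℂ) →L[ℂ] (n → ℂ)) :=
  Matrix.toLinAlgEquiv'.trans (Module.End.toContinuousLinearMap (n → ℂ))

@[simp]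
theorem Matrix.toCLM'_apply {n : Type*} [Fintype n] [DecidableEq n] (M : Matrix n n ℂ)
    (v : n → ℂ) : Matrix.toCLM' M v = M *ᵥ v :=
  rfl

namespace LcompA

variable {k : ℕ}

def linearPart (k : ℕ) : (Fin k → ℂ) →ₗ[ℂ] Matrix (Fin k) (Fin k) ℂ where
  toFun v := LcompA k v - LcompA k 0
  map_add' v w := by
    ext i j
    simp only [LcompA, Matrix.sub_apply, Matrix.add_apply, Pi.add_apply, Pi.zero_apply]
    split_ifs <;> ring
  map_smul' c v := by
    ext i j
    simp only [LcompA, Matrix.sub_apply, Matrix.smul_apply, Pi.smul_apply, Pi.zero_apply,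
      smul_eq_mul, RingHom.id_apply]
    split_ifs <;> ring

theorem eq_add_linearPart (u : Fin k → ℂ) : LcompA k u = LcompA k 0 + linearPart k u := by
  simp [linearPart]

theorem hasFDerivAt_toCLM' (s : Fin k → ℂ) :
    HasFDerivAt (fun u => toCLM' (LcompA k u))
      (LinearMap.toContinuousLinearMap (toCLM'.toLinearMap ∘ₗ linearPart k)) s := by
  have hsplit : (fun u => toCLM' (LcompA k u))
      = fun u => toCLM' (LcompA k 0) + (toCLM'.toLinearMap ∘ₗ linearPart k) u := by
    funext u
    rw [eq_add_linearPart u, map_add]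
    rfl
  rw [hsplit]
  exact (LinearMap.toContinuousLinearMap _).hasFDerivAt.const_add _

theorem linearPart_single {i : ℕ} (hi : i < k) :
    linearPart k (Pi.single ⟨i, hi⟩ 1) =
      (-1 : ℂ) ^ i •
        vecMulVec (Pi.single ⟨k - 1, by omega⟩ 1) (Pi.single ⟨k - 1 - i, by omega⟩ 1) := by
  ext a b
  simp only [linearPart, LinearMap.coe_mk, AddHom.coe_mk, Matrix.sub_apply, LcompA,
    Matrix.smul_apply, vecMulVec_apply, Pi.single_apply, Fin.ext_iff, Pi.zero_apply]
  have := b.isLt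
  split_ifs <;> first | (exfalso; omega) | simp_all

theorem single_vecMul {i : ℕ} (hi : i + 1 < k) (s : Fin k → ℂ) :
    Pi.single ⟨i, by omega⟩ 1 ᵥ* LcompA k s = Pi.single ⟨i + 1, hi⟩ 1 := by
  ext j
  simp only [single_one_vecMul, row, LcompA, Pi.single_apply, Fin.ext_iff]
  have := j.isLt
  split_ifs <;> first | rfl | omega

theorem single_zero_vecMul_pow {p : ℕ} (hp : p < k) (s : Fin k → ℂ) :
    Pi.single ⟨0, by omega⟩ 1 ᵥ* LcompA k s ^ p = Pi.single ⟨p, hp⟩ 1 := by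
  induction p with
  | zero => simp
  | succ p ih => rw [pow_succ, ← vecMul_vecMul, ih (by omega), single_vecMul hp]

theorem linearPart_single_eq_smul_mul_pow (s : Fin k → ℂ) {j : ℕ} (hj1 : 1 ≤ j) (hjk : j ≤ k) :
    linearPart k (Pi.single ⟨j - 1, by omega⟩ 1) =
      (-1 : ℂ) ^ (k + j) •
        (linearPart k (Pi.single ⟨k - 1, by omega⟩ 1) * LcompA k s ^ (k - j)) := by
  rw [linearPart_single, linearPart_single, smul_mul_assoc, vecMulVec_mul, smul_smul]
  simp only [Nat.sub_self, show k - 1 - (j - 1) = k - j by omega]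
  rw [single_zero_vecMul_pow (by omega), ← pow_add,
    show k + j + (k - 1) = j - 1 + 2 * k by omega, pow_add, pow_mul, neg_one_sq, one_pow, mul_one]

theorem pow_mulVec_eq_toCLM' (Φ : (Fin k → ℂ) → Fin k → ℂ) (m : ℕ) :
    (fun u => LcompA k u ^ m *ᵥ Φ u) = fun u => (toCLM' (LcompA k u) ^ m) (Φ u) := by
  funext u
  rw [← map_pow]
  rfl

theorem differentiable_pow_mulVec {Φ : (Fin k → ℂ) → Fin k → ℂ} (hΦ : Differentiable ℂ Φ)
    (m : ℕ) : Differentiable ℂ fun u => LcompA k u ^ m *ᵥ Φ u := by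
  rw [pow_mulVec_eq_toCLM']
  exact fun u => ((hasFDerivAt_toCLM' u).differentiableAt.fun_pow m).clm_apply (hΦ u)

end LcompA

namespace SatA

variable {k : ℕ} {Φ : (Fin k → ℂ) → Fin k → ℂ} {s : Fin k → ℂ}

theorem fderiv_apply_single (hsol : SatA k Φ s) {h : ℕ} (h1 : 1 ≤ h) (h2 : h ≤ k - 1) :
    fderiv ℂ Φ s (Pi.single ⟨h - 1, by omega⟩ 1) =
      (-1 : ℂ) ^ (k + h) • fderiv ℂ (fun u => LcompA k u ^ (k - h) *ᵥ Φ u) s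
        (Pi.single ⟨k - 1, by omega⟩ 1) := by
  rw [← hsol h h1 h2, smul_smul, ← pow_add, Even.neg_one_pow ⟨k + h, rfl⟩, one_smul]

theorem fderiv_pow_mulVec_apply_single (hΦ : Differentiable ℂ Φ) (hsol : SatA k Φ s) (m : ℕ)
    {j : ℕ} (j1 : 1 ≤ j) (j2 : j ≤ k - 1) :
    fderiv ℂ (fun u => LcompA k u ^ m *ᵥ Φ u) s (Pi.single ⟨j - 1, by omega⟩ 1) =
      (-1 : ℂ) ^ (k + j) • fderiv ℂ (fun u => LcompA k u ^ (m + (k - j)) *ᵥ Φ u) s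
        (Pi.single ⟨k - 1, by omega⟩ 1) := by
  have hA := LcompA.hasFDerivAt_toCLM' (k := k) s
  have hΦj := hsol.fderiv_apply_single j1 j2
  simp only [LcompA.pow_mulVec_eq_toCLM'] at hΦj ⊢
  refine fderiv_pow_apply_apply_eq_smul (T := fun u => toCLM' (LcompA k u)) hA.differentiableAt
    (hΦ s) ?_ hΦj m
  simp only [hA.fderiv, LinearMap.coe_toContinuousLinearMap', LinearMap.coe_comp,
    Function.comp_apply, LcompA.linearPart_single_eq_smul_mul_pow s j1 (by omega : j ≤ k)]
  simp [map_smul, map_mul, map_pow]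

end SatA

/-- integrability of the system (@): for a holomorphic solution `Φ` of (@),
`(−1)^{h+j} ∂²Φ/(∂s_j ∂s_h) = ∂²(A(s)^{2k−h−j} Φ)/∂s_k²` for all `h, j ∈ {1, …, k−1}`;
in particular the mixed second derivatives depend only on `h + j` and are symmetric. -/
theorem system_integrable
    (k : ℕ) (Φ : (Fin k → ℂ) → Fin k → ℂ)
    (hΦdiff : Differentiable ℂ Φ) (hΦsol : ∀ s : Fin k → ℂ, SatA k Φ s) :
    ∀ (s : Fin k → ℂ) (h j : ℕ), ∀ _h1 : 1 ≤ h, ∀ _h2 : h ≤ k - 1,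
      ∀ _j1 : 1 ≤ j, ∀ _j2 : j ≤ k - 1,
      ((-1 : ℂ) ^ (h + j)) •
          fderiv ℂ (fun t => fderiv ℂ Φ t (Pi.single (⟨h - 1, by omega⟩ : Fin k) (1 : ℂ)))
            s (Pi.single (⟨j - 1, by omega⟩ : Fin k) (1 : ℂ))
        = fderiv ℂ
            (fun t => fderiv ℂ (fun u => (LcompA k u ^ (2 * k - h - j)) *ᵥ Φ u) t
              (Pi.single (⟨k - 1, by omega⟩ : Fin k) (1 : ℂ)))
            s (Pi.single (⟨k - 1, by omega⟩ : Fin k) (1 : ℂ)) := by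
  intro s h j h1 h2 j1 j2
  have hsmooth : ContDiff ℂ 2 fun u => LcompA k u ^ (k - h) *ᵥ Φ u :=
    (LcompA.differentiable_pow_mulVec hΦdiff _).contDiff_of_finiteDimensional 2
  have hΦh : (fun t => fderiv ℂ Φ t (Pi.single ⟨h - 1, by omega⟩ 1)) = (-1 : ℂ) ^ (k + h) •
      fun t => fderiv ℂ (fun u => LcompA k u ^ (k - h) *ᵥ Φ u) t (Pi.single ⟨k - 1, by omega⟩ 1) :=
    funext fun t => by rw [Pi.smul_apply]; exact (hΦsol t).fderiv_apply_single h1 h2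
  have hFj : (fun t => fderiv ℂ (fun u => LcompA k u ^ (k - h) *ᵥ Φ u) t
      (Pi.single ⟨j - 1, by omega⟩ 1)) = (-1 : ℂ) ^ (k + j) • fun t =>
        fderiv ℂ (fun u => LcompA k u ^ (k - h + (k - j)) *ᵥ Φ u) t
          (Pi.single ⟨k - 1, by omega⟩ 1) :=
    funext fun t => by
      rw [Pi.smul_apply]
      exact (hΦsol t).fderiv_pow_mulVec_apply_single hΦdiff _ j1 j2
  rw [show 2 * k - h - j = k - h + (k - j) by omega, hΦh, fderiv_const_smul_field, Pi.smul_apply,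
    _root_.smul_apply, hsmooth.fderiv_fderiv_apply_comm, hFj, fderiv_const_smul_field,
    Pi.smul_apply, _root_.smul_apply, smul_smul, smul_smul, ← pow_add, ← pow_add,
    Even.neg_one_pow ⟨h + j + k, by ring⟩, one_smul]
end
end

section
/- For each integer p ∈ {0,…,k−1}, every component of the vector z^p E(z) − A(s)^p E(z) − (−1)^{k−1} P_s(z) (∂(A(s)^p)/∂s_k) E(z) lies in the ideal of ℂ[s_1,…,s_k,z] generated by P_s(z)²; that is, the identity z^p E(z) = A(s)^p E(z) + (−1)^{k−1} P_s(z) (∂(A(s)^p)/∂s_k) E(z) holds in the module ℂ^k ⊗ ℂ[s_1,…,s_k,z]/(P_s(z)²). -/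
open Matrix MvPolynomial

noncomputable section

/-- The polynomial ring `ℂ[s_1, …, s_k, z]` realized as `MvPolynomial (Fin (k+1)) ℂ`:
the variable of index `i < k` is `s_{i+1}` and the variable of index `k` is `z`. -/
abbrev LRing (k : ℕ) : Type := MvPolynomial (Fin (k + 1)) ℂ

/-- The variable `z`. -/
def Lz (k : ℕ) : LRing k := MvPolynomial.X (Fin.last k)

/-- The universal monic polynomial `P_s(z) = Σ_{h=0}^{k} (−1)^h s_h z^{k−h}` (with `s_0 = 1`)
as an element of `ℂ[s_1, …, s_k, z]`. -/
def LPpoly (k : ℕ) : LRing k :=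
  Lz k ^ k + ∑ i : Fin k,
    (-1 : LRing k) ^ ((i : ℕ) + 1) * MvPolynomial.X (Fin.castSucc i) * Lz k ^ (k - 1 - (i : ℕ))

/-- The vector `E(z) = (1, z, …, z^{k−1})ᵀ`. -/
def LEvec (k : ℕ) : Fin k → LRing k := fun j => Lz k ^ (j : ℕ)

/-- The companion matrix `A(s)` of `P_s`, with entries in `ℂ[s_1, …, s_k, z]`
(its entries only involve the variables `s_1, …, s_k`). -/
def LA (k : ℕ) : Matrix (Fin k) (Fin k) (LRing k) := fun i j =>
  if (i : ℕ) = k - 1 then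
    (-1 : LRing k) ^ (k - 1 - (j : ℕ)) *
      MvPolynomial.X (⟨k - 1 - (j : ℕ), by omega⟩ : Fin (k + 1))
  else if (j : ℕ) = (i : ℕ) + 1 then 1 else 0

namespace Aux

/-- vector with 1 in last slot -/
def evec (k : ℕ) : Fin k → LRing k := fun j => if (j : ℕ) = k - 1 then 1 else 0

lemma A_mulVec_E (k : ℕ) (hk : 1 ≤ k) :
    LA k *ᵥ LEvec k = fun j => Lz k • LEvec k j - LPpoly k • evec k j := by
  funext j
  simp only [Matrix.mulVec, dotProduct, LA, LEvec, evec, smul_eq_mul]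
  by_cases hj : (j : ℕ) = k - 1
  · simp only [hj, if_pos rfl, if_true]
    have hrev : ∑ i : Fin k, (-1 : LRing k) ^ (k - 1 - (i : ℕ)) *
        MvPolynomial.X (⟨k - 1 - (i : ℕ), by omega⟩ : Fin (k + 1)) * Lz k ^ (i : ℕ)
        = ∑ i : Fin k, (-1 : LRing k) ^ (i : ℕ) *
        MvPolynomial.X (⟨(i : ℕ), by omega⟩ : Fin (k + 1)) * Lz k ^ (k - 1 - (i : ℕ)) := by
      refine Fintype.sum_equiv (Fin.revPerm) _ _ fun i => ?_
      have h1 : (Fin.revPerm i : Fin k) = ⟨k - 1 - (i : ℕ), by omega⟩ := by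
        apply Fin.ext; simp [Fin.rev]; omega
      rw [h1]
      have h2 : k - 1 - (k - 1 - (i : ℕ)) = (i : ℕ) := by omega
      simp only [h2]
    rw [hrev]
    have hz : Lz k * Lz k ^ (k - 1) = Lz k ^ k := by
      rw [← pow_succ']; congr 1; omega
    rw [hz, mul_one, LPpoly]
    have habs : ∀ a b : LRing k, a - (a + b) = -b := fun a b => by ring
    rw [habs, ← Finset.sum_neg_distrib]
    refine Finset.sum_congr rfl fun i _ => ?_
    have hc : MvPolynomial.X (⟨(i : ℕ), by omega⟩ : Fin (k + 1))
        = (MvPolynomial.X (Fin.castSucc i) : LRing k) := by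
      congr 1
    rw [hc]
    ring
  · simp only [hj, if_false]
    have hlt : (j : ℕ) + 1 < k := by have := j.isLt; omega
    rw [Finset.sum_eq_single (⟨(j : ℕ) + 1, hlt⟩ : Fin k)]
    · simp [← pow_succ']
    · intro b _ hb
      rw [if_neg, zero_mul]
      intro h
      exact hb (Fin.ext h)
    · simp

end Aux

namespace Aux2

variable (k : ℕ)

/-- partial derivative w.r.t. s_k -/
def D (k : ℕ) : LRing k → LRing k :=
  fun q => MvPolynomial.pderiv (⟨k - 1, by omega⟩ : Fin (k + 1)) q

lemma leibniz (M N : Matrix (Fin k) (Fin k) (LRing k)) :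
    (M * N).map (D k) = M.map (D k) * N + M * N.map (D k) := by
  apply Matrix.ext; intro i j
  simp only [Matrix.map_apply, Matrix.mul_apply, Matrix.add_apply, D]
  have h1 : (MvPolynomial.pderiv (⟨k - 1, by omega⟩ : Fin (k + 1))) (∑ l : Fin k, M i l * N l j)
      = ∑ l : Fin k, (MvPolynomial.pderiv (⟨k - 1, by omega⟩ : Fin (k + 1))) (M i l * N l j) :=
    _root_.map_sum _ _ _
  rw [h1, ← Finset.sum_add_distrib]
  refine Finset.sum_congr rfl fun l _ => ?_
  rw [MvPolynomial.pderiv_mul]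

lemma map_one : (1 : Matrix (Fin k) (Fin k) (LRing k)).map (D k) = 0 := by
  apply Matrix.ext; intro i j
  simp only [Matrix.map_apply, Matrix.one_apply, Matrix.zero_apply, D]
  split <;> simp [MvPolynomial.pderiv_one]

lemma DA (hk : 1 ≤ k) :
    (LA k).map (D k) = fun (i j : Fin k) =>
      if (i : ℕ) = k - 1 ∧ (j : ℕ) = 0 then (-1 : LRing k) ^ (k - 1) else 0 := by
  funext i j
  simp only [Matrix.map_apply, LA, D]
  by_cases hi : (i : ℕ) = k - 1
  · simp only [hi, if_pos rfl, true_and, if_true]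
    rw [MvPolynomial.pderiv_mul]
    have hpc : MvPolynomial.pderiv (⟨k - 1, by omega⟩ : Fin (k + 1))
        ((-1 : LRing k) ^ (k - 1 - (j : ℕ))) = 0 := by
      have : ((-1 : LRing k) ^ (k - 1 - (j : ℕ)))
          = MvPolynomial.C ((-1 : ℂ) ^ (k - 1 - (j : ℕ))) := by
        simp [map_pow]
      rw [this, MvPolynomial.pderiv_C]
    rw [hpc, zero_mul, zero_add]
    by_cases hj : (j : ℕ) = 0
    · rw [if_pos hj]
      simp only [hj, Nat.sub_zero]
      rw [MvPolynomial.pderiv_X_self, mul_one]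
    · rw [if_neg hj, MvPolynomial.pderiv_X_of_ne, mul_zero]
      intro h
      have := Fin.mk.injEq (k - 1 - (j : ℕ)) _ (k - 1) _ ▸ h
      have h2 : k - 1 - (j : ℕ) = k - 1 := by
        simpa using congrArg Fin.val h
      have := j.isLt
      omega
  · simp only [hi, if_false, false_and]
    split <;> simp [D, MvPolynomial.pderiv_one]

lemma DA_mulVec_E (hk : 1 ≤ k) :
    ((LA k).map (D k)) *ᵥ LEvec k = fun i => (-1 : LRing k) ^ (k - 1) * Aux.evec k i := by
  funext i
  rw [DA k hk]
  simp only [Matrix.mulVec, dotProduct, Aux.evec]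
  by_cases hi : (i : ℕ) = k - 1
  · simp only [hi, if_pos rfl, true_and, if_true]
    rw [Finset.sum_eq_single (⟨0, by omega⟩ : Fin k)]
    · simp [LEvec]
    · intro b _ hb
      rw [if_neg, zero_mul]
      intro h
      exact hb (Fin.ext h)
    · simp
  · simp [hi]



lemma key (hk : 2 ≤ k) (p : ℕ) (j : Fin k) :
    Lz k ^ p * LEvec k j - ((LA k ^ p) *ᵥ LEvec k) j
      - (-1 : LRing k) ^ (k - 1) * LPpoly k * (((LA k ^ p).map (D k)) *ᵥ LEvec k) j
      ∈ Ideal.span {LPpoly k ^ 2} := by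
  have hk1 : 1 ≤ k := by omega
  induction p generalizing j with
  | zero =>
    simp only [pow_zero, Matrix.one_mulVec, map_one, Matrix.zero_mulVec, Pi.zero_apply,
      mul_zero, one_mul, sub_self, sub_zero]
    exact Ideal.zero_mem _
  | succ p ih =>
    set c : LRing k := (-1) ^ (k - 1) with hc
    have hc2 : c * c = 1 := by
      rw [hc, ← pow_add, ← two_mul, pow_mul, neg_one_sq, one_pow]
    have h1 : (LA k ^ (p + 1)) *ᵥ LEvec k
        = fun i => Lz k * ((LA k ^ p) *ᵥ LEvec k) i
            - LPpoly k * ((LA k ^ p) *ᵥ Aux.evec k) i := by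
      rw [pow_succ, ← Matrix.mulVec_mulVec, Aux.A_mulVec_E k hk1]
      have e1 : (fun j => Lz k • LEvec k j - LPpoly k • Aux.evec k j)
          = Lz k • LEvec k - LPpoly k • Aux.evec k := rfl
      rw [e1, Matrix.mulVec_sub, Matrix.mulVec_smul, Matrix.mulVec_smul]
      funext i
      simp [smul_eq_mul]
    have h2 : ((LA k ^ (p + 1)).map (D k)) *ᵥ LEvec k
        = fun i => Lz k * (((LA k ^ p).map (D k)) *ᵥ LEvec k) i
            - LPpoly k * (((LA k ^ p).map (D k)) *ᵥ Aux.evec k) i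
            + c * ((LA k ^ p) *ᵥ Aux.evec k) i := by
      rw [pow_succ, leibniz, Matrix.add_mulVec, ← Matrix.mulVec_mulVec,
        ← Matrix.mulVec_mulVec, Aux.A_mulVec_E k hk1, DA_mulVec_E k hk1]
      have e1 : (fun j => Lz k • LEvec k j - LPpoly k • Aux.evec k j)
          = Lz k • LEvec k - LPpoly k • Aux.evec k := rfl
      have e2 : (fun i => (-1 : LRing k) ^ (k - 1) * Aux.evec k i) = c • Aux.evec k := rfl
      rw [e1, e2, Matrix.mulVec_sub, Matrix.mulVec_smul, Matrix.mulVec_smul,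
        Matrix.mulVec_smul]
      funext i
      simp only [Pi.add_apply, Pi.sub_apply, Pi.smul_apply, smul_eq_mul]
    have hkey : Lz k ^ (p + 1) * LEvec k j - ((LA k ^ (p + 1)) *ᵥ LEvec k) j
        - c * LPpoly k * (((LA k ^ (p + 1)).map (D k)) *ᵥ LEvec k) j
        = Lz k * (Lz k ^ p * LEvec k j - ((LA k ^ p) *ᵥ LEvec k) j
            - c * LPpoly k * (((LA k ^ p).map (D k)) *ᵥ LEvec k) j)
          + (c * (((LA k ^ p).map (D k)) *ᵥ Aux.evec k) j) * LPpoly k ^ 2 := by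
      rw [h1, h2]
      linear_combination (-(LPpoly k * ((LA k ^ p) *ᵥ Aux.evec k) j)) * hc2
    rw [hkey]
    exact Ideal.add_mem _ (Ideal.mul_mem_left _ _ (ih j))
      (Ideal.mul_mem_left _ _ (Ideal.subset_span (Set.mem_singleton _)))

end Aux2

/-- for `0 ≤ p ≤ k−1`, every component of
`z^p E(z) − A(s)^p E(z) − (−1)^{k−1} P_s(z) (∂(A(s)^p)/∂s_k) E(z)`
lies in the ideal of `ℂ[s_1, …, s_k, z]` generated by `P_s(z)²`. -/
theorem zpow_mul_E_eq_companion_pow_mod_Psq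
    (k : ℕ) (hk : 2 ≤ k) (p : ℕ) (hp : p ≤ k - 1) (j : Fin k) :
    Lz k ^ p * LEvec k j - ((LA k ^ p) *ᵥ LEvec k) j
      - (-1 : LRing k) ^ (k - 1) * LPpoly k *
          (((LA k ^ p).map
              (fun q => MvPolynomial.pderiv (⟨k - 1, by omega⟩ : Fin (k + 1)) q)) *ᵥ LEvec k) j
      ∈ Ideal.span {LPpoly k ^ 2} := by
  exact Aux2.key k hk p j
end
end

section
/- Every component of the vector P'_s(z) E(z) − P'_s(A(s)) E(z) − (−1)^{k−1} P_s(z) (∂(P'_s(A(s)))/∂s_k) E(z) lies in the ideal of ℂ[s_1,…,s_k,z] generated by P_s(z)²; that is, P'_s(z) E(z) = P'_s(A(s)) E(z) + (−1)^{k−1} P_s(z) (∂(P'_s(A(s)))/∂s_k) E(z) holds in ℂ^k ⊗ ℂ[s_1,…,s_k,z]/(P_s(z)²). -/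
open Matrix MvPolynomial

noncomputable section

/-- The derivative `P'_s(z) = Σ_{h=0}^{k−1} (−1)^h (k−h) s_h z^{k−h−1}` (with `s_0 = 1`). -/
def LPpoly' (k : ℕ) : LRing k :=
  (k : LRing k) * Lz k ^ (k - 1) + ∑ i : Fin k,
    (-1 : LRing k) ^ ((i : ℕ) + 1) * ((k - 1 - (i : ℕ) : ℕ) : LRing k) *
      MvPolynomial.X (Fin.castSucc i) * Lz k ^ (k - 2 - (i : ℕ))

/-- `P'_s(A(s)) = Σ_{h=0}^{k−1} (−1)^h (k−h) s_h A(s)^{k−h−1}` (with `s_0 = 1`). -/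
def LPprimeA (k : ℕ) : Matrix (Fin k) (Fin k) (LRing k) :=
  (k : LRing k) • LA k ^ (k - 1) + ∑ i : Fin k,
    ((-1 : LRing k) ^ ((i : ℕ) + 1) * ((k - 1 - (i : ℕ) : ℕ) : LRing k) *
      MvPolynomial.X (Fin.castSucc i)) • LA k ^ (k - 2 - (i : ℕ))

/-- last basis vector -/
def auxE (k : ℕ) : Fin k → LRing k := fun j => if (j : ℕ) = k - 1 then 1 else 0

lemma auxAE (k : ℕ) (hk : 2 ≤ k) :
    LA k *ᵥ LEvec k = Lz k • LEvec k - LPpoly k • auxE k := by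
  funext i
  by_cases hi : (i : ℕ) = k - 1
  · simp only [mulVec, dotProduct, LA, LEvec, auxE, hi, if_pos rfl, Pi.smul_apply,
      Pi.sub_apply, smul_eq_mul, if_true, LPpoly, mul_one]
    have hz : Lz k * Lz k ^ (k - 1) = Lz k ^ k := by
      rw [← pow_succ']; congr 1; omega
    rw [hz]
    have : ∀ i : Fin k,
        (-1 : LRing k) ^ (k - 1 - ((i.rev : Fin k) : ℕ)) *
          MvPolynomial.X (⟨k - 1 - ((i.rev : Fin k) : ℕ), by omega⟩ : Fin (k+1)) *
            Lz k ^ ((i.rev : Fin k) : ℕ)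
        = -((-1 : LRing k) ^ ((i : ℕ) + 1) * MvPolynomial.X (Fin.castSucc i) *
            Lz k ^ (k - 1 - (i : ℕ))) := by
      intro i
      have hrev : ((i.rev : Fin k) : ℕ) = k - 1 - (i : ℕ) := by
        simp [Fin.rev]; omega
      have h2 : k - 1 - (k - 1 - (i : ℕ)) = (i : ℕ) := by
        have := i.isLt; omega
      have hX : (⟨k - 1 - ((i.rev : Fin k) : ℕ), by omega⟩ : Fin (k+1)) = Fin.castSucc i := by
        ext; have := i.isLt; simp [Fin.rev]; omega
      rw [hX, hrev, h2]
      have : (-1 : LRing k) ^ ((i : ℕ) + 1) = -(-1 : LRing k) ^ (i : ℕ) := by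
        rw [pow_succ]; ring
      rw [this]; ring
    calc ∑ l : Fin k, (-1 : LRing k) ^ (k - 1 - (l : ℕ)) *
            MvPolynomial.X (⟨k - 1 - (l : ℕ), by omega⟩ : Fin (k+1)) * Lz k ^ (l : ℕ)
        = ∑ i : Fin k, (-1 : LRing k) ^ (k - 1 - ((i.rev : Fin k) : ℕ)) *
            MvPolynomial.X (⟨k - 1 - ((i.rev : Fin k) : ℕ), by omega⟩ : Fin (k+1)) *
              Lz k ^ ((i.rev : Fin k) : ℕ) := by
          exact (Fintype.sum_equiv (Equiv.symm Fin.revPerm) _ _ (fun i => rfl)).symm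
      _ = ∑ i : Fin k, -((-1 : LRing k) ^ ((i : ℕ) + 1) * MvPolynomial.X (Fin.castSucc i) *
            Lz k ^ (k - 1 - (i : ℕ))) := Finset.sum_congr rfl (fun i _ => this i)
      _ = _ := by rw [Finset.sum_neg_distrib]; ring
  · have hi1 : (i : ℕ) + 1 < k := by have := i.isLt; omega
    simp only [mulVec, dotProduct, LA, LEvec, auxE, hi, if_neg, if_false, Pi.smul_apply,
      Pi.sub_apply, smul_eq_mul, mul_zero, sub_zero]
    have : ∀ l : Fin k, (if (l : ℕ) = (i : ℕ) + 1 then (1 : LRing k) else 0) * Lz k ^ (l : ℕ)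
        = if l = (⟨(i : ℕ) + 1, hi1⟩ : Fin k) then Lz k ^ (l : ℕ) else 0 := by
      intro l
      by_cases h : (l : ℕ) = (i : ℕ) + 1
      · rw [if_pos h, if_pos (by ext; exact h), one_mul]
      · rw [if_neg h, if_neg (by intro hc; exact h (by rw [hc])), zero_mul]
    rw [Finset.sum_congr rfl (fun l _ => this l), Finset.sum_ite_eq' Finset.univ]
    simp [pow_succ, mul_comm]

/-- u_t = A^t e_last -/
def auxU (k : ℕ) (t : ℕ) : Fin k → LRing k := (LA k ^ t) *ᵥ auxE k

/-- W_m = Σ_{t<m} z^{m-1-t} u_t -/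
def auxW (k : ℕ) (m : ℕ) : Fin k → LRing k :=
  ∑ t ∈ Finset.range m, (Lz k ^ (m - 1 - t)) • auxU k t

lemma aux_sum_mulVec {k : ℕ} {ι : Type*} (s : Finset ι)
    (M : ι → Matrix (Fin k) (Fin k) (LRing k)) (v : Fin k → LRing k) :
    (∑ i ∈ s, M i) *ᵥ v = ∑ i ∈ s, M i *ᵥ v := by
  funext j
  simp [mulVec, dotProduct, Finset.sum_apply, Finset.sum_mul, Matrix.sum_apply]
  rw [Finset.sum_comm]

lemma aux_mulVec_sum {k : ℕ} {ι : Type*} (s : Finset ι)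
    (M : Matrix (Fin k) (Fin k) (LRing k)) (v : ι → Fin k → LRing k) :
    M *ᵥ (∑ i ∈ s, v i) = ∑ i ∈ s, M *ᵥ v i := by
  funext j
  simp [mulVec, dotProduct, Finset.sum_apply, Finset.mul_sum]
  rw [Finset.sum_comm]

lemma auxWsucc (k : ℕ) (m : ℕ) :
    auxW k (m + 1) = (Lz k ^ m) • auxE k + LA k *ᵥ auxW k m := by
  rw [auxW, Finset.sum_range_succ', add_comm]
  congr 1
  · simp [auxU, one_mulVec]
  · rw [show auxW k m = ∑ t ∈ Finset.range m, (Lz k ^ (m - 1 - t)) • auxU k t from rfl,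
      aux_mulVec_sum]
    refine Finset.sum_congr rfl (fun t _ => ?_)
    rw [mulVec_smul]
    congr 1
    · congr 1; omega
    · show auxU k (t + 1) = _
      rw [auxU, auxU, pow_succ', ← mulVec_mulVec]

lemma auxPowAE (k : ℕ) (hk : 2 ≤ k) (m : ℕ) :
    (LA k ^ m) *ᵥ LEvec k = (Lz k ^ m) • LEvec k - LPpoly k • auxW k m := by
  induction m with
  | zero => simp [auxW, one_mulVec]
  | succ m ih =>
    rw [pow_succ', ← mulVec_mulVec, ih, mulVec_sub, mulVec_smul, mulVec_smul, auxAE k hk,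
      auxWsucc]
    funext j
    simp only [Pi.sub_apply, Pi.smul_apply, Pi.add_apply, smul_eq_mul]
    rw [pow_succ]
    ring

/-- the variable s_k -/
def auxd (k : ℕ) : Fin (k + 1) := ⟨k - 1, by omega⟩

lemma auxD_neg_one_pow (k p : ℕ) : pderiv (auxd k) ((-1 : LRing k) ^ p) = 0 := by
  have h : ((-1 : LRing k)) = C (-1 : ℂ) := by simp
  rw [h, ← map_pow, pderiv_C]

lemma auxmapA (k : ℕ) (hk : 2 ≤ k) (i j : Fin k) :
    ((LA k).map (pderiv (auxd k))) i j =
      if (i : ℕ) = k - 1 ∧ (j : ℕ) = 0 then ((-1 : LRing k) ^ (k - 1)) else 0 := by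
  rw [Matrix.map_apply, LA]
  by_cases hi : (i : ℕ) = k - 1
  · rw [if_pos hi, pderiv_mul, auxD_neg_one_pow, zero_mul, zero_add]
    by_cases hj : (j : ℕ) = 0
    · simp only [hj, Nat.sub_zero]
      rw [show (⟨k - 1, by omega⟩ : Fin (k + 1)) = auxd k from rfl, pderiv_X_self,
        mul_one, if_pos (⟨hi, trivial⟩ : (i:ℕ) = k - 1 ∧ True)]
    · rw [pderiv_X_of_ne (by
        intro hc
        have := congrArg Fin.val hc
        simp only [auxd] at this
        have := j.isLt; omega), mul_zero, if_neg (fun h => hj h.2)]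
  · rw [if_neg hi,
      if_neg (show ¬((i : ℕ) = k - 1 ∧ (j : ℕ) = 0) from fun h => hi h.1)]
    split_ifs <;> simp [pderiv_one]

lemma auxmapA_mulVec (k : ℕ) (hk : 2 ≤ k) (v : Fin k → LRing k) :
    ((LA k).map (pderiv (auxd k))) *ᵥ v
      = ((-1 : LRing k) ^ (k - 1) * v ⟨0, by omega⟩) • auxE k := by
  funext i
  simp only [mulVec, dotProduct, auxmapA k hk, auxE, Pi.smul_apply, smul_eq_mul]
  by_cases hi : (i : ℕ) = k - 1
  · simp only [hi, true_and, if_pos rfl, mul_one]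
    have : ∀ l : Fin k, (if (l : ℕ) = 0 then ((-1 : LRing k) ^ (k - 1)) else 0) * v l
        = if l = (⟨0, by omega⟩ : Fin k) then ((-1 : LRing k) ^ (k - 1)) * v l else 0 := by
      intro l
      by_cases h : (l : ℕ) = 0
      · rw [if_pos h, if_pos (by ext; exact h)]
      · rw [if_neg h, if_neg (by intro hc; exact h (by rw [hc])), zero_mul]
    rw [Finset.sum_congr rfl (fun l _ => this l), Finset.sum_ite_eq' Finset.univ]
    simp
  · simp [hi]

lemma auxmapD_mul (k : ℕ) (M N : Matrix (Fin k) (Fin k) (LRing k)) :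
    (M * N).map (pderiv (auxd k))
      = M.map (pderiv (auxd k)) * N + M * N.map (pderiv (auxd k)) := by
  ext i j
  simp only [Matrix.map_apply, Matrix.mul_apply, Matrix.add_apply]
  rw [show (pderiv (auxd k)) (∑ l, M i l * N l j)
      = ∑ l, pderiv (auxd k) (M i l * N l j) from map_sum _ _ _]
  simp only [pderiv_mul, Finset.sum_add_distrib]

lemma auxmapD_one (k : ℕ) :
    (1 : Matrix (Fin k) (Fin k) (LRing k)).map (pderiv (auxd k)) = 0 := by
  ext i j
  simp only [Matrix.map_apply, Matrix.one_apply, Matrix.zero_apply]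
  split_ifs <;> simp [pderiv_one]

lemma auxVm (k : ℕ) (hk : 2 ≤ k) (m : ℕ) : ∃ Z : Fin k → LRing k,
    ((LA k ^ m).map (pderiv (auxd k))) *ᵥ LEvec k
      = ((-1 : LRing k) ^ (k - 1)) • auxW k m + LPpoly k • Z := by
  induction m with
  | zero =>
    refine ⟨0, ?_⟩
    simp [auxmapD_one, auxW, zero_mulVec]
  | succ m ih =>
    obtain ⟨Z, hZ⟩ := ih
    refine ⟨(LA k *ᵥ Z) + (-((-1 : LRing k) ^ (k - 1) * (auxW k m ⟨0, by omega⟩))) • auxE k, ?_⟩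
    rw [pow_succ', auxmapD_mul, add_mulVec, ← mulVec_mulVec, ← mulVec_mulVec,
      auxPowAE k hk, auxmapA_mulVec k hk, hZ, auxWsucc]
    have hE0 : (Lz k ^ m • LEvec k - LPpoly k • auxW k m) (⟨0, by omega⟩ : Fin k)
        = Lz k ^ m - LPpoly k * auxW k m ⟨0, by omega⟩ := by
      simp [LEvec]
    rw [hE0, mulVec_add, mulVec_smul, mulVec_smul]
    funext j
    simp only [Pi.add_apply, Pi.smul_apply, Pi.sub_apply, smul_eq_mul, Pi.neg_apply]
    ring

def auxc (k : ℕ) (i : Fin k) : LRing k :=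
  (-1 : LRing k) ^ ((i : ℕ) + 1) * ((k - 1 - (i : ℕ) : ℕ) : LRing k) *
    MvPolynomial.X (Fin.castSucc i)

def auxG (k : ℕ) : Fin k → LRing k :=
  (k : LRing k) • auxW k (k - 1) + ∑ i : Fin k, auxc k i • auxW k (k - 2 - (i : ℕ))

lemma auxPprimeA_def (k : ℕ) : LPprimeA k =
    (k : LRing k) • LA k ^ (k - 1) + ∑ i : Fin k, auxc k i • LA k ^ (k - 2 - (i : ℕ)) := rfl

lemma auxLPpoly'_def (k : ℕ) : LPpoly' k =
    (k : LRing k) * Lz k ^ (k - 1) + ∑ i : Fin k, auxc k i * Lz k ^ (k - 2 - (i : ℕ)) := rfl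

lemma auxStep1 (k : ℕ) (hk : 2 ≤ k) :
    LPprimeA k *ᵥ LEvec k = LPpoly' k • LEvec k - LPpoly k • auxG k := by
  have h1 : LPprimeA k *ᵥ LEvec k
      = (k : LRing k) • ((Lz k ^ (k - 1)) • LEvec k - LPpoly k • auxW k (k - 1))
        + ∑ i : Fin k, auxc k i •
            ((Lz k ^ (k - 2 - (i : ℕ))) • LEvec k - LPpoly k • auxW k (k - 2 - (i : ℕ))) := by
    rw [auxPprimeA_def, add_mulVec, aux_sum_mulVec, smul_mulVec, auxPowAE k hk]
    congr 1
    refine Finset.sum_congr rfl fun i _ => ?_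
    rw [smul_mulVec, auxPowAE k hk]
  rw [h1, auxLPpoly'_def, auxG]
  funext j
  simp only [Pi.add_apply, Pi.sub_apply, Pi.smul_apply, Finset.sum_apply, smul_eq_mul]
  have e1 : ∀ i : Fin k, auxc k i *
      (Lz k ^ (k - 2 - (i : ℕ)) * LEvec k j - LPpoly k * auxW k (k - 2 - (i : ℕ)) j)
      = auxc k i * Lz k ^ (k - 2 - (i : ℕ)) * LEvec k j
        - LPpoly k * (auxc k i * auxW k (k - 2 - (i : ℕ)) j) := fun i => by ring
  rw [Finset.sum_congr rfl (fun i _ => e1 i), Finset.sum_sub_distrib, add_mul,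
    Finset.sum_mul, mul_add, Finset.mul_sum]
  ring

lemma auxD_natCast (k n : ℕ) : pderiv (auxd k) ((n : ℕ) : LRing k) = 0 := by
  rw [← map_natCast (C : ℂ →+* LRing k) n, pderiv_C]

lemma auxD_c (k : ℕ) (hk : 2 ≤ k) (i : Fin k) : pderiv (auxd k) (auxc k i) = 0 := by
  rw [auxc, pderiv_mul, pderiv_mul, auxD_neg_one_pow, auxD_natCast]
  simp only [zero_mul, mul_zero, add_zero, zero_add]
  by_cases hi : (i : ℕ) = k - 1
  · rw [show ((k - 1 - (i : ℕ) : ℕ) : LRing k) = 0 by rw [hi]; simp]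
    ring
  · rw [pderiv_X_of_ne (by
      intro hc
      have := congrArg Fin.val hc
      simp only [auxd, Fin.castSucc, Fin.coe_castAdd] at this
      exact hi this), mul_zero]

lemma auxmapD_add (k : ℕ) (M N : Matrix (Fin k) (Fin k) (LRing k)) :
    (M + N).map (pderiv (auxd k)) = M.map (pderiv (auxd k)) + N.map (pderiv (auxd k)) := by
  ext i j
  simp [Matrix.map_apply]

lemma auxmapD_sum (k : ℕ) (M : Fin k → Matrix (Fin k) (Fin k) (LRing k)) :
    (∑ i : Fin k, M i).map (pderiv (auxd k)) = ∑ i : Fin k, (M i).map (pderiv (auxd k)) := by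
  refine Matrix.ext fun a b => ?_
  simp only [Matrix.map_apply, Matrix.sum_apply]
  exact map_sum (pderiv (auxd k)) (fun i => (M i) a b) Finset.univ

lemma auxmapD_smul (k : ℕ) (r : LRing k) (hr : pderiv (auxd k) r = 0)
    (M : Matrix (Fin k) (Fin k) (LRing k)) :
    (r • M).map (pderiv (auxd k)) = r • M.map (pderiv (auxd k)) := by
  ext i j
  simp [Matrix.map_apply, Matrix.smul_apply, smul_eq_mul, pderiv_mul, hr]

lemma auxStep2 (k : ℕ) (hk : 2 ≤ k) : ∃ Z : Fin k → LRing k,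
    ((LPprimeA k).map (pderiv (auxd k))) *ᵥ LEvec k
      = ((-1 : LRing k) ^ (k - 1)) • auxG k + LPpoly k • Z := by
  choose Zf hZf using auxVm k hk
  refine ⟨(k : LRing k) • Zf (k - 1) + ∑ i : Fin k, auxc k i • Zf (k - 2 - (i : ℕ)), ?_⟩
  have hmap : (LPprimeA k).map (pderiv (auxd k))
      = (k : LRing k) • ((LA k ^ (k - 1)).map (pderiv (auxd k)))
        + ∑ i : Fin k, auxc k i • ((LA k ^ (k - 2 - (i : ℕ))).map (pderiv (auxd k))) := by
    rw [auxPprimeA_def, auxmapD_add, auxmapD_sum, auxmapD_smul k _ (auxD_natCast k k)]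
    congr 1
    refine Finset.sum_congr rfl fun i _ => ?_
    rw [auxmapD_smul k _ (auxD_c k hk i)]
  have h1 : ((LPprimeA k).map (pderiv (auxd k))) *ᵥ LEvec k
      = (k : LRing k) • (((-1 : LRing k) ^ (k - 1)) • auxW k (k - 1) + LPpoly k • Zf (k - 1))
        + ∑ i : Fin k, auxc k i • (((-1 : LRing k) ^ (k - 1)) • auxW k (k - 2 - (i : ℕ))
            + LPpoly k • Zf (k - 2 - (i : ℕ))) := by
    rw [hmap, add_mulVec, aux_sum_mulVec, smul_mulVec, hZf]
    congr 1
    refine Finset.sum_congr rfl fun i _ => ?_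
    rw [smul_mulVec, hZf]
  rw [h1, auxG]
  funext j
  simp only [Pi.add_apply, Pi.smul_apply, Finset.sum_apply, smul_eq_mul]
  have e1 : ∀ i : Fin k, auxc k i *
      ((-1 : LRing k) ^ (k - 1) * auxW k (k - 2 - (i : ℕ)) j
        + LPpoly k * Zf (k - 2 - (i : ℕ)) j)
      = (-1 : LRing k) ^ (k - 1) * (auxc k i * auxW k (k - 2 - (i : ℕ)) j)
        + LPpoly k * (auxc k i * Zf (k - 2 - (i : ℕ)) j) := fun i => by ring
  rw [Finset.sum_congr rfl (fun i _ => e1 i), Finset.sum_add_distrib]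
  simp only [mul_add, Finset.mul_sum]
  ring

/-- every component of
`P'_s(z) E(z) − P'_s(A(s)) E(z) − (−1)^{k−1} P_s(z) (∂(P'_s(A(s)))/∂s_k) E(z)`
lies in the ideal of `ℂ[s_1, …, s_k, z]` generated by `P_s(z)²`. -/
theorem Pprime_mul_E_eq_PprimeA_mod_Psq
    (k : ℕ) (hk : 2 ≤ k) (j : Fin k) :
    LPpoly' k * LEvec k j - (LPprimeA k *ᵥ LEvec k) j
      - (-1 : LRing k) ^ (k - 1) * LPpoly k *
          (((LPprimeA k).map
              (fun q => MvPolynomial.pderiv (⟨k - 1, by omega⟩ : Fin (k + 1)) q)) *ᵥ LEvec k) j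
      ∈ Ideal.span {LPpoly k ^ 2} := by
  obtain ⟨Z, hZ⟩ := auxStep2 k hk
  have hmapeq : (LPprimeA k).map
      (fun q => MvPolynomial.pderiv (⟨k - 1, by omega⟩ : Fin (k + 1)) q)
      = (LPprimeA k).map (pderiv (auxd k)) := rfl
  rw [hmapeq, hZ, auxStep1 k hk]
  have hsq : (-1 : LRing k) ^ (k - 1) * (-1 : LRing k) ^ (k - 1) = 1 := by
    rw [← pow_add]
    exact Even.neg_one_pow ⟨k - 1, rfl⟩
  rw [Ideal.mem_span_singleton]
  refine ⟨-((-1 : LRing k) ^ (k - 1) * Z j), ?_⟩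
  simp only [Pi.sub_apply, Pi.add_apply, Pi.smul_apply, smul_eq_mul]
  linear_combination (-(LPpoly k * auxG k j)) * hsq
end
end

section
/- For every entire function f, the Lisbon integral of z·f(z) is obtained by applying the companion matrix: Φ_{zf}(s) = A(s)·Φ_f(s) for all s ∈ ℂ^k, where zf denotes the entire function ζ ↦ ζ f(ζ). -/
open Matrix Complex

noncomputable section

/-! Dividing `ζ ^ k` by `P_s` leaves the quotient `1` and the remainder
`Σ_j (-1)^j s_j ζ^(k-1-j)`; this is exactly what the last row of the companion matrix records.
Hence `ζ f(ζ) ζ^(k-1) / P_s(ζ) = f(ζ) + Σ_j (-1)^j s_j f(ζ) ζ^(k-1-j) / P_s(ζ)`, and the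
contribution of the entire function `f` integrates to zero by Cauchy's theorem. The other rows
of `A(s)` merely shift `ζ^h` to `ζ^(h+1)`. -/

def lisbonPhi (k : ℕ) (s : Fin k → ℂ) (R : ℝ) (f : ℂ → ℂ) : Fin k → ℂ := fun h =>
  (2 * Real.pi * Complex.I)⁻¹ * ∮ ζ in C(0, R), f ζ * ζ ^ (h : ℕ) / LP k s ζ

section Polynomial

variable (k : ℕ) (s : Fin k → ℂ)

theorem continuous_LP : Continuous (LP k s) := by
  unfold LP
  fun_prop

theorem pow_eq_LP_add_sum (z : ℂ) :
    z ^ k = LP k s z + ∑ j : Fin k, (-1) ^ (j : ℕ) * s j * z ^ (j.rev : ℕ) := by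
  rw [LP, add_assoc, ← Finset.sum_add_distrib, Finset.sum_eq_zero, add_zero]
  intro j _
  rw [Fin.val_rev, show k - (j + 1) = k - 1 - j by omega]
  ring

theorem LcompA_mulVec_of_ne_last (v : Fin k → ℂ) (i : Fin k) (hi : (i : ℕ) ≠ k - 1) :
    (LcompA k s *ᵥ v) i = v ⟨i + 1, by omega⟩ := by
  simp only [mulVec, dotProduct, LcompA, if_neg hi, ite_mul, one_mul, zero_mul]
  refine (Fintype.sum_eq_single (⟨i + 1, by omega⟩ : Fin k) fun j hj =>
    if_neg fun h => hj (Fin.ext h)).trans (if_pos rfl)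

theorem LcompA_mulVec_last (v : Fin k → ℂ) (i : Fin k) (hi : (i : ℕ) = k - 1) :
    (LcompA k s *ᵥ v) i = ∑ j : Fin k, (-1) ^ (j : ℕ) * s j * v j.rev := by
  simp only [mulVec, dotProduct, LcompA, if_pos hi]
  refine Fintype.sum_equiv Fin.revPerm _ _ fun j => ?_
  have hrev : j.rev = ⟨k - 1 - j, by omega⟩ := Fin.ext (by simp only [Fin.val_rev]; omega)
  rw [Fin.revPerm_apply, Fin.rev_rev, hrev]

end Polynomial

section Integral

variable {k : ℕ} {s : Fin k → ℂ} {R : ℝ}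

theorem LP_ne_zero_of_le_norm (hroots : ∀ z : ℂ, LP k s z = 0 → ‖z‖ < R) {ζ : ℂ}
    (hζ : R ≤ ‖ζ‖) : LP k s ζ ≠ 0 :=
  fun h0 => (hroots ζ h0).not_ge hζ

theorem continuousOn_div_LP (hroots : ∀ z : ℂ, LP k s z = 0 → ‖z‖ < R) {g : ℂ → ℂ}
    (hg : Continuous g) : ContinuousOn (fun ζ => g ζ / LP k s ζ) (Metric.sphere 0 |R|) :=
  hg.continuousOn.div (continuous_LP k s).continuousOn fun _ hζ =>
    LP_ne_zero_of_le_norm hroots <| (mem_sphere_zero_iff_norm.1 hζ).symm ▸ le_abs_self R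

theorem lisbonPhi_mul_id_of_ne_last (f : ℂ → ℂ) (h : Fin k) (hh : (h : ℕ) ≠ k - 1) :
    lisbonPhi k s R (fun ζ => ζ * f ζ) h = lisbonPhi k s R f ⟨h + 1, by omega⟩ := by
  simp only [lisbonPhi, pow_succ]
  congr 2
  funext ζ
  ring

theorem lisbonPhi_mul_id_last (hR : 0 ≤ R) (hroots : ∀ z : ℂ, LP k s z = 0 → ‖z‖ < R)
    {f : ℂ → ℂ} (hf : Differentiable ℂ f) (h : Fin k) (hh : (h : ℕ) = k - 1) :
    lisbonPhi k s R (fun ζ => ζ * f ζ) h =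
      ∑ j : Fin k, (-1) ^ (j : ℕ) * s j * lisbonPhi k s R f j.rev := by
  have hdiv : ∀ ζ ∈ Metric.sphere (0 : ℂ) R, ζ * f ζ * ζ ^ (h : ℕ) / LP k s ζ =
      f ζ + ∑ j : Fin k, (-1) ^ (j : ℕ) * s j * (f ζ * ζ ^ (j.rev : ℕ) / LP k s ζ) := by
    intro ζ hζ
    have hP : LP k s ζ ≠ 0 := LP_ne_zero_of_le_norm hroots (mem_sphere_zero_iff_norm.1 hζ).ge
    have hpow : ζ * ζ ^ (h : ℕ) = ζ ^ k := by rw [← pow_succ']; congr 1; omega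
    calc ζ * f ζ * ζ ^ (h : ℕ) / LP k s ζ = f ζ * ζ ^ k / LP k s ζ := by rw [← hpow]; ring
      _ = f ζ * (LP k s ζ + ∑ j : Fin k, (-1) ^ (j : ℕ) * s j * ζ ^ (j.rev : ℕ)) / LP k s ζ := by
        rw [← pow_eq_LP_add_sum]
      _ = _ := by
        rw [mul_add, add_div, mul_div_cancel_right₀ _ hP, Finset.mul_sum, Finset.sum_div]
        exact congrArg _ (Finset.sum_congr rfl fun j _ => by ring)
  have hterm (j : Fin k) : ContinuousOn
      (fun ζ => (-1) ^ (j : ℕ) * s j * (f ζ * ζ ^ (j.rev : ℕ) / LP k s ζ)) (Metric.sphere 0 |R|) :=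
    continuousOn_const.mul (continuousOn_div_LP hroots (hf.continuous.mul (continuous_pow _)))
  simp only [lisbonPhi]
  rw [circleIntegral.integral_congr hR hdiv,
    circleIntegral.integral_add (hf.continuous.continuousOn.circleIntegrable hR)
      (continuousOn_finsetSum _ fun j _ => hterm j).circleIntegrable',
    hf.diffContOnCl.circleIntegral_eq_zero hR, zero_add,
    circleIntegral.integral_fun_sum fun j _ => (hterm j).circleIntegrable', Finset.mul_sum]
  refine Finset.sum_congr rfl fun j _ => ?_
  rw [circleIntegral.integral_const_mul]
  ring

end Integral

theorem lisbon_Phi_z_mul_general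
    (k : ℕ) (f : ℂ → ℂ) (hf : Differentiable ℂ f)
    (s : Fin k → ℂ) (R : ℝ) (hR : 0 < R)
    (hroots : ∀ z : ℂ, LP k s z = 0 → ‖z‖ < R) :
    (fun h : Fin k => (2 * Real.pi * Complex.I)⁻¹ *
        ∮ ζ in C(0, R), (ζ * f ζ) * ζ ^ (h : ℕ) / LP k s ζ)
      = LcompA k s *ᵥ (fun h : Fin k => (2 * Real.pi * Complex.I)⁻¹ *
          ∮ ζ in C(0, R), f ζ * ζ ^ (h : ℕ) / LP k s ζ) := by
  change lisbonPhi k s R (fun ζ => ζ * f ζ) = LcompA k s *ᵥ lisbonPhi k s R f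
  funext h
  by_cases hh : (h : ℕ) = k - 1
  · rw [LcompA_mulVec_last k s _ h hh, lisbonPhi_mul_id_last hR.le hroots hf h hh]
  · rw [LcompA_mulVec_of_ne_last k s _ h hh, lisbonPhi_mul_id_of_ne_last f h hh]

/-- `Φ_{zf}(s) = A(s) · Φ_f(s)`, where `zf : ζ ↦ ζ f(ζ)`. -/
theorem lisbon_Phi_z_mul
    (k : ℕ) (hk : 2 ≤ k) (f : ℂ → ℂ) (hf : Differentiable ℂ f)
    (s : Fin k → ℂ) (R : ℝ) (hR : 0 < R)
    (hroots : ∀ z : ℂ, LP k s z = 0 → ‖z‖ < R) :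
    (fun h : Fin k => (2 * Real.pi * Complex.I)⁻¹ *
        ∮ ζ in C(0, R), (ζ * f ζ) * ζ ^ (h : ℕ) / LP k s ζ)
      = LcompA k s *ᵥ (fun h : Fin k => (2 * Real.pi * Complex.I)⁻¹ *
          ∮ ζ in C(0, R), f ζ * ζ ^ (h : ℕ) / LP k s ζ) :=
  lisbon_Phi_z_mul_general k f hf s R hR hroots
end
end

section
/- (Case k = 2.) For every entire function f : ℂ → ℂ and every m ∈ ℕ, the scalar Lisbon integral φ_m(s, p) := (1/2πi) ∮_{|ζ|=R} f(ζ) ζ^m dζ / (ζ² − sζ + p) (with R > 0 such that both roots of ζ² − sζ + p lie in {|ζ| < R}) is annihilated by the operator Θ := ∂²/∂s² + s·∂²/∂s∂p + p·∂²/∂p² + 2·∂/∂p, i.e. ∂²φ_m/∂s² + s·∂²φ_m/∂s∂p + p·∂²φ_m/∂p² + 2·∂φ_m/∂p = 0 on ℂ². -/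
/-!
Fix `x = (s, p)`. One radius `R` encloses the roots of `ζ² − s'ζ + p'` for every `(s', p')`
near `x`, so near `x` the function `φ_m` is `c · I₁(g)`, where `c = (2πi)⁻¹`,
`g(ζ) = f(ζ) ζ^m` and `Iₙ(g)(s, p) = ∮_{|ζ|=R} g(ζ) / (ζ² − sζ + p)ⁿ dζ`.
Differentiating under the integral sign gives `∂_s Iₙ(g) = n Iₙ₊₁(ζ g)` and
`∂_p Iₙ(g) = −n Iₙ₊₁(g)`, hence
`Θ φ_m = 2c (I₃(ζ² g) − s I₃(ζ g) + p I₃(g) − I₂(g))`,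
which vanishes because `ζ² − sζ + p` cancels one power of the denominator.
-/

open Complex

noncomputable section

/-- Partial derivative in the first coordinate (`∂/∂s`) for functions on `ℂ² = ℂ × ℂ`. -/
def pds (F : ℂ × ℂ → ℂ) (x : ℂ × ℂ) : ℂ := fderiv ℂ F x (1, 0)

/-- Partial derivative in the second coordinate (`∂/∂p`) for functions on `ℂ² = ℂ × ℂ`. -/
def pdp (F : ℂ × ℂ → ℂ) (x : ℂ × ℂ) : ℂ := fderiv ℂ F x (0, 1)

open Metric Filter Topology

theorem IsCompact.exists_pos_eventually_le_norm {X Y E : Type*} [TopologicalSpace X]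
    [TopologicalSpace Y] [NormedAddCommGroup E] {K : Set Y} (hK : IsCompact K) {G : X → Y → E}
    (hG : Continuous fun z : X × Y => G z.1 z.2) {x₀ : X} (h : ∀ y ∈ K, G x₀ y ≠ 0) :
    ∃ δ > 0, ∀ᶠ x in 𝓝 x₀, ∀ y ∈ K, δ ≤ ‖G x y‖ := by
  have hGx₀ : Continuous fun y => ‖G x₀ y‖ := (hG.comp (.prodMk_right x₀)).norm
  obtain ⟨δ, hδ, hδK⟩ := hK.exists_forall_le' hGx₀.continuousOn fun y hy => norm_pos_iff.2 (h y hy)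
  refine ⟨δ / 2, half_pos hδ, hK.eventually_forall_of_forall_eventually fun y hy => ?_⟩
  exact (continuousAt_const.eventually_lt hG.norm.continuousAt
    (by linarith [hδK y hy] : δ / 2 < ‖G x₀ y‖)).mono fun _ h => h.le

theorem hasFDerivAt_circleIntegral_of_dominated {H E : Type*} [NormedAddCommGroup H]
    [NormedSpace ℂ H] [NormedAddCommGroup E] [NormedSpace ℂ E] [CompleteSpace E]
    {F : H → ℂ → E} {F' : H → ℂ → H →L[ℂ] E} {x₀ : H} {s : Set H} {c : ℂ} {R C : ℝ}
    (hs : s ∈ 𝓝 x₀) (hF : ∀ x ∈ s, ContinuousOn (F x) (sphere c |R|))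
    (hF' : ContinuousOn (F' x₀) (sphere c |R|))
    (h_bound : ∀ x ∈ s, ∀ z ∈ sphere c |R|, ‖F' x z‖ ≤ C)
    (h_diff : ∀ x ∈ s, ∀ z ∈ sphere c |R|, HasFDerivAt (F · z) (F' x z) x) :
    HasFDerivAt (fun x => ∮ z in C(c, R), F x z) (∮ z in C(c, R), F' x₀ z) x₀ := by
  refine intervalIntegral.hasFDerivAt_integral_of_dominated_of_fderiv_le
    (F := fun x θ => deriv (circleMap c R) θ • F x (circleMap c R θ))
    (F' := fun x θ => deriv (circleMap c R) θ • F' x (circleMap c R θ))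
    (bound := fun _ => |R| * C) hs ?_ (hF x₀ (mem_of_mem_nhds hs)).circleIntegrable'.out
    hF'.circleIntegrable'.out.aestronglyMeasurable_restrict_uIoc ?_ intervalIntegrable_const ?_
  · filter_upwards [hs] with x hx
    exact (hF x hx).circleIntegrable'.out.aestronglyMeasurable_restrict_uIoc
  · refine .of_forall fun θ _ x hx => ?_
    rw [norm_smul, deriv_circleMap, norm_mul, norm_circleMap_zero, norm_I, mul_one]
    exact mul_le_mul_of_nonneg_left (h_bound x hx _ (circleMap_mem_sphere' c R θ)) (abs_nonneg R)
  · exact .of_forall fun θ _ x hx => (h_diff x hx _ (circleMap_mem_sphere' c R θ)).const_smul _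

theorem circleIntegral.integral_congr_abs {E : Type*} [NormedAddCommGroup E] [NormedSpace ℂ E]
    {f₁ f₂ : ℂ → E} {c : ℂ} {R : ℝ} (h : Set.EqOn f₁ f₂ (sphere c |R|)) :
    (∮ z in C(c, R), f₁ z) = ∮ z in C(c, R), f₂ z :=
  intervalIntegral.integral_congr fun θ _ => by simp only [h (circleMap_mem_sphere' c R θ)]

theorem circleIntegral_smul_fst_sub_snd {a : ℂ → ℂ} {c : ℂ} {R : ℝ}
    (ha : ContinuousOn a (sphere c |R|)) :
    (∮ ζ in C(c, R), a ζ • (ζ • ContinuousLinearMap.fst ℂ ℂ ℂ - ContinuousLinearMap.snd ℂ ℂ ℂ)) =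
      (∮ ζ in C(c, R), ζ * a ζ) • ContinuousLinearMap.fst ℂ ℂ ℂ -
        (∮ ζ in C(c, R), a ζ) • ContinuousLinearMap.snd ℂ ℂ ℂ := by
  have hint {b : ℂ → ℂ} (hb : ContinuousOn b (sphere c |R|)) (e : ℂ × ℂ →L[ℂ] ℂ) :
      CircleIntegrable (fun ζ => b ζ • e) c R :=
    (hb.smul continuousOn_const).circleIntegrable'
  simp_rw [smul_sub, smul_smul, mul_comm (a _)]
  rw [circleIntegral.integral_sub (hint (b := fun ζ => ζ * a ζ) (continuousOn_id.mul ha) _)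
      (hint ha _),
    circleIntegral.integral_smul_const, circleIntegral.integral_smul_const]

theorem hasDerivAt_div_pow {𝕜 : Type*} [NontriviallyNormedField 𝕜] (a : 𝕜) {w : 𝕜} (hw : w ≠ 0)
    (n : ℕ) : HasDerivAt (fun w => a / w ^ n) (-(n * a / w ^ (n + 1))) w := by
  refine ((hasDerivAt_const w a).div (hasDerivAt_pow n w) (pow_ne_zero n hw)).congr_deriv ?_
  rcases n with _ | n
  · simp
  · simp only [Nat.add_sub_cancel]
    field_simp
    ring

theorem norm_smul_fst_sub_snd_le {𝕜 : Type*} [NontriviallyNormedField 𝕜] (a : 𝕜) :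
    ‖a • ContinuousLinearMap.fst 𝕜 𝕜 𝕜 - ContinuousLinearMap.snd 𝕜 𝕜 𝕜‖ ≤ ‖a‖ + 1 := by
  grw [norm_sub_le, norm_smul, ContinuousLinearMap.norm_fst_le, ContinuousLinearMap.norm_snd_le,
    mul_one]

theorem norm_le_one_add_of_quadratic_eq_zero {s p z : ℂ} (h : z ^ 2 - s * z + p = 0) :
    ‖z‖ ≤ 1 + ‖s‖ + ‖p‖ := by
  rcases le_or_gt ‖z‖ 1 with hz | hz
  · linarith [norm_nonneg s, norm_nonneg p]
  have : ‖z‖ ^ 2 ≤ ‖s‖ * ‖z‖ + ‖p‖ := by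
    calc ‖z‖ ^ 2 = ‖s * z - p‖ := by rw [← norm_pow, show z ^ 2 = s * z - p by linear_combination h]
      _ ≤ ‖s‖ * ‖z‖ + ‖p‖ := by grw [norm_sub_le, norm_mul]
  nlinarith [norm_nonneg s, norm_nonneg p]

theorem exists_pos_eventually_norm_root_lt (x : ℂ × ℂ) :
    ∃ R > 0, ∀ᶠ y in 𝓝 x, ∀ z : ℂ, z ^ 2 - y.1 * z + y.2 = 0 → ‖z‖ < R := by
  refine ⟨2 + ‖x.1‖ + ‖x.2‖, by positivity, ?_⟩
  have hx : 1 + ‖x.1‖ + ‖x.2‖ < 2 + ‖x.1‖ + ‖x.2‖ := by linarith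
  have hcont : Continuous fun y : ℂ × ℂ => 1 + ‖y.1‖ + ‖y.2‖ := by fun_prop
  filter_upwards [hcont.continuousAt.eventually_lt continuousAt_const hx] with y hy z hz
  exact (norm_le_one_add_of_quadratic_eq_zero hz).trans_lt hy

theorem hasFDerivAt_quad (ζ : ℂ) (y : ℂ × ℂ) :
    HasFDerivAt (fun y : ℂ × ℂ => ζ ^ 2 - y.1 * ζ + y.2)
      (ContinuousLinearMap.snd ℂ ℂ ℂ - ζ • ContinuousLinearMap.fst ℂ ℂ ℂ) y := by
  refine ((((hasFDerivAt_fst (p := y)).mul_const ζ).const_sub (ζ ^ 2)).fun_add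
    (hasFDerivAt_snd (p := y))).congr_fderiv ?_
  ext <;> simp

theorem Filter.EventuallyEq.pds_eq {F G : ℂ × ℂ → ℂ} {x : ℂ × ℂ} (h : F =ᶠ[𝓝 x] G) :
    pds F x = pds G x := by
  rw [pds, pds, h.fderiv_eq]

theorem Filter.EventuallyEq.pdp_eq {F G : ℂ × ℂ → ℂ} {x : ℂ × ℂ} (h : F =ᶠ[𝓝 x] G) :
    pdp F x = pdp G x := by
  rw [pdp, pdp, h.fderiv_eq]

def quadCircleIntegral (g : ℂ → ℂ) (R : ℝ) (n : ℕ) (x : ℂ × ℂ) : ℂ :=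
  ∮ ζ in C(0, R), g ζ / (ζ ^ 2 - x.1 * ζ + x.2) ^ n

section quadCircleIntegral

variable {g : ℂ → ℂ} {R : ℝ} {x : ℂ × ℂ}

theorem continuousOn_div_quad_pow (hg : ContinuousOn g (sphere 0 |R|))
    (hx : ∀ ζ ∈ sphere (0 : ℂ) |R|, ζ ^ 2 - x.1 * ζ + x.2 ≠ 0) (n : ℕ) :
    ContinuousOn (fun ζ => g ζ / (ζ ^ 2 - x.1 * ζ + x.2) ^ n) (sphere 0 |R|) :=
  hg.div (by fun_prop) fun ζ hζ => pow_ne_zero n (hx ζ hζ)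

theorem hasFDerivAt_quadCircleIntegral (hg : ContinuousOn g (sphere 0 |R|)) (n : ℕ)
    (hx : ∀ ζ ∈ sphere (0 : ℂ) |R|, ζ ^ 2 - x.1 * ζ + x.2 ≠ 0) :
    HasFDerivAt (quadCircleIntegral g R n)
      ((n * quadCircleIntegral (fun ζ => ζ * g ζ) R (n + 1) x) • ContinuousLinearMap.fst ℂ ℂ ℂ -
        (n * quadCircleIntegral g R (n + 1) x) • ContinuousLinearMap.snd ℂ ℂ ℂ) x := by
  obtain ⟨δ, hδ, hδx⟩ := (isCompact_sphere (0 : ℂ) |R|).exists_pos_eventually_le_norm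
    (G := fun (y : ℂ × ℂ) ζ => ζ ^ 2 - y.1 * ζ + y.2) (by fun_prop) hx
  obtain ⟨M, hM⟩ := (isCompact_sphere (0 : ℂ) |R|).exists_bound_of_continuousOn hg
  have hderiv := hasFDerivAt_circleIntegral_of_dominated
    (F := fun y ζ => g ζ / (ζ ^ 2 - y.1 * ζ + y.2) ^ n)
    (F' := fun y ζ => (n * g ζ / (ζ ^ 2 - y.1 * ζ + y.2) ^ (n + 1)) •
      (ζ • ContinuousLinearMap.fst ℂ ℂ ℂ - ContinuousLinearMap.snd ℂ ℂ ℂ))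
    (c := 0) (R := R) (C := n * M / δ ^ (n + 1) * (|R| + 1)) hδx ?_ ?_ ?_ ?_
  · refine hderiv.congr_fderiv ?_
    rw [circleIntegral_smul_fst_sub_snd
      (continuousOn_div_quad_pow (g := fun ζ => n * g ζ) (continuousOn_const.mul hg) hx (n + 1))]
    simp only [quadCircleIntegral, ← circleIntegral.integral_const_mul, mul_div_assoc,
      mul_left_comm (n : ℂ)]
  · intro y hy
    exact continuousOn_div_quad_pow hg (fun ζ hζ => norm_pos_iff.1 (hδ.trans_le (hy ζ hζ))) n
  · exact (continuousOn_div_quad_pow (g := fun ζ => n * g ζ) (continuousOn_const.mul hg) hx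
      (n + 1)).smul (by fun_prop)
  · intro y hy ζ hζ
    have hQ : δ ^ (n + 1) ≤ ‖(ζ ^ 2 - y.1 * ζ + y.2) ^ (n + 1)‖ := by
      rw [norm_pow]; gcongr; exact hy ζ hζ
    have hL := norm_smul_fst_sub_snd_le ζ
    rw [mem_sphere_zero_iff_norm.1 hζ] at hL
    have hM0 : 0 ≤ M := (norm_nonneg _).trans (hM ζ hζ)
    rw [norm_smul, norm_div, norm_mul, Complex.norm_natCast]
    gcongr
    exact hM ζ hζ
  · intro y hy ζ hζ
    have hQ : ζ ^ 2 - y.1 * ζ + y.2 ≠ 0 := norm_pos_iff.1 (hδ.trans_le (hy ζ hζ))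
    refine ((hasDerivAt_div_pow (g ζ) hQ n).comp_hasFDerivAt y
      (hasFDerivAt_quad ζ y)).congr_fderiv ?_
    ext <;> simp

theorem quadCircleIntegral_recurrence (hg : ContinuousOn g (sphere 0 |R|))
    (hx : ∀ ζ ∈ sphere (0 : ℂ) |R|, ζ ^ 2 - x.1 * ζ + x.2 ≠ 0) (n : ℕ) :
    quadCircleIntegral (fun ζ => ζ * (ζ * g ζ)) R (n + 1) x -
        x.1 * quadCircleIntegral (fun ζ => ζ * g ζ) R (n + 1) x +
        x.2 * quadCircleIntegral g R (n + 1) x =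
      quadCircleIntegral g R n x := by
  have hint {h : ℂ → ℂ} (hh : ContinuousOn h (sphere 0 |R|)) (a : ℂ) :
      CircleIntegrable (fun ζ => a * (h ζ / (ζ ^ 2 - x.1 * ζ + x.2) ^ (n + 1))) 0 R :=
    (continuousOn_const.mul (continuousOn_div_quad_pow hh hx (n + 1))).circleIntegrable'
  have h₁ := hint (h := fun ζ => ζ * (ζ * g ζ)) (continuousOn_id.mul (continuousOn_id.mul hg)) 1
  have h₂ := hint (h := fun ζ => ζ * g ζ) (continuousOn_id.mul hg) x.1
  simp only [quadCircleIntegral, one_mul] at h₁ ⊢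
  have h₁₂ := h₁.sub h₂
  simp only [Pi.sub_def] at h₁₂
  rw [← circleIntegral.integral_const_mul, ← circleIntegral.integral_const_mul,
    ← circleIntegral.integral_sub h₁ h₂, ← circleIntegral.integral_add h₁₂ (hint hg x.2)]
  refine circleIntegral.integral_congr_abs fun ζ hζ => ?_
  have hQ := hx ζ hζ
  generalize hq : ζ ^ 2 - x.1 * ζ + x.2 = q at hQ ⊢
  field_simp
  linear_combination g ζ * q ^ n * hq

theorem pds_const_mul_quadCircleIntegral (a : ℂ) (hg : ContinuousOn g (sphere 0 |R|)) (n : ℕ)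
    (hx : ∀ ζ ∈ sphere (0 : ℂ) |R|, ζ ^ 2 - x.1 * ζ + x.2 ≠ 0) :
    pds (fun y => a * quadCircleIntegral g R n y) x =
      a * n * quadCircleIntegral (fun ζ => ζ * g ζ) R (n + 1) x := by
  rw [pds, ((hasFDerivAt_quadCircleIntegral hg n hx).const_mul a).fderiv]
  simp [mul_assoc]

theorem pdp_const_mul_quadCircleIntegral (a : ℂ) (hg : ContinuousOn g (sphere 0 |R|)) (n : ℕ)
    (hx : ∀ ζ ∈ sphere (0 : ℂ) |R|, ζ ^ 2 - x.1 * ζ + x.2 ≠ 0) :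
    pdp (fun y => a * quadCircleIntegral g R n y) x =
      -(a * n) * quadCircleIntegral g R (n + 1) x := by
  rw [pdp, ((hasFDerivAt_quadCircleIntegral hg n hx).const_mul a).fderiv]
  simp [mul_assoc]

end quadCircleIntegral

/-- case `k = 2`: for any entire `f` and any `m ∈ ℕ`, the scalar Lisbon
integral `φ_m(s,p) = (1/2πi) ∮_{|ζ|=R} f(ζ) ζ^m dζ / (ζ² − sζ + p)` (for any admissible
radius `R`) is annihilated on `ℂ²` by `Θ = ∂²/∂s² + s ∂²/∂s∂p + p ∂²/∂p² + 2 ∂/∂p`. -/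
theorem theta_annihilates_scalar_lisbon_integral
    (f : ℂ → ℂ) (hf : Differentiable ℂ f) (m : ℕ) (φ : ℂ × ℂ → ℂ)
    (hφ : ∀ (s p : ℂ) (R : ℝ), 0 < R →
      (∀ z : ℂ, z ^ 2 - s * z + p = 0 → ‖z‖ < R) →
      φ (s, p) = (2 * Real.pi * Complex.I)⁻¹ *
        ∮ ζ in C(0, R), f ζ * ζ ^ m / (ζ ^ 2 - s * ζ + p)) :
    ∀ x : ℂ × ℂ,
      pds (pds φ) x + x.1 * pds (pdp φ) x + x.2 * pdp (pdp φ) x + 2 * pdp φ x = 0 := by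
  intro x
  obtain ⟨R, hR, hroots⟩ := exists_pos_eventually_norm_root_lt x
  set c := (2 * Real.pi * Complex.I)⁻¹
  set g := fun ζ => f ζ * ζ ^ m
  have hg : ContinuousOn g (sphere 0 |R|) := (hf.continuous.mul (continuous_pow m)).continuousOn
  have hQ : ∀ᶠ y in 𝓝 x, ∀ ζ ∈ sphere (0 : ℂ) |R|, ζ ^ 2 - y.1 * ζ + y.2 ≠ 0 :=
    hroots.mono fun y hy ζ hζ h0 => (hy ζ h0).ne (by simpa [abs_of_pos hR] using hζ)
  have hφ_eq : ∀ᶠ y in 𝓝 x, φ y = c * quadCircleIntegral g R 1 y :=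
    hroots.mono fun y hy => by simpa [quadCircleIntegral] using hφ y.1 y.2 R hR hy
  have h_s : pds φ =ᶠ[𝓝 x] fun y => c * quadCircleIntegral (fun ζ => ζ * g ζ) R 2 y := by
    filter_upwards [hφ_eq.eventually_nhds, hQ] with y hy hyQ
    rw [Filter.EventuallyEq.pds_eq hy, pds_const_mul_quadCircleIntegral c hg 1 hyQ]
    norm_num
  have h_p : pdp φ =ᶠ[𝓝 x] fun y => -c * quadCircleIntegral g R 2 y := by
    filter_upwards [hφ_eq.eventually_nhds, hQ] with y hy hyQ
    rw [Filter.EventuallyEq.pdp_eq hy, pdp_const_mul_quadCircleIntegral c hg 1 hyQ]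
    norm_num
  rw [h_s.pds_eq, h_p.pds_eq, h_p.pdp_eq, h_p.self_of_nhds,
    pds_const_mul_quadCircleIntegral (g := fun ζ => ζ * g ζ) _ (continuousOn_id.mul hg) 2
      hQ.self_of_nhds,
    pds_const_mul_quadCircleIntegral _ hg 2 hQ.self_of_nhds,
    pdp_const_mul_quadCircleIntegral _ hg 2 hQ.self_of_nhds]
  linear_combination (2 * c) * quadCircleIntegral_recurrence hg hQ.self_of_nhds 2
end
end
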